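/- arXiv:1904.07600 — 9 statements merged into one kernel-verified Lean document; each statement's English description precedes it below -/
import Mathlib

section
/- Let H₁, H₂ be real Hilbert spaces, Q ⊆ H₂ nonempty closed convex, A : H₁ → H₂ a bounded linear operator, and F : H₂×H₂ → ℝ a bifunction with F(u,u) = 0 for all u ∈ Q. Let x ∈ H₁, set u = P_Q(Ax), let ε ≥ 0, β > 0, ρ > 0, let w ∈ H₂ be an ε-diagonal subgradient of F at u over Q, set γ = β/max{ρ, ‖w‖} and y = P_Q(u − γ w). Then for every x* ∈ H₁ with Ax* ∈ EP(F,Q): 2⟨A(x − x*), y − Ax⟩ ≤ −‖u − Ax‖² − ‖y − Ax‖² + 2γ F(u, Ax*) + δ, where δ = 2βε/ρ + 2β². -/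
open RealInnerProductSpace Filter

/-- `z` is the metric projection of `v` onto `K`. -/
def IsProjOn {H : Type*} [NormedAddCommGroup H] [InnerProductSpace ℝ H]
    (K : Set H) (v z : H) : Prop :=
  z ∈ K ∧ ∀ y ∈ K, (⟪v - z, y - z⟫) ≤ 0

/-- `g` is an `ε`-diagonal subgradient of the bifunction `f` at `z` over `K`,
i.e. `f(z,y) + ε ≥ ⟨g, y - z⟩` for all `y ∈ K`. -/
def IsDiagSubgrad {H : Type*} [NormedAddCommGroup H] [InnerProductSpace ℝ H]
    (K : Set H) (f : H → H → ℝ) (ε : ℝ) (z g : H) : Prop :=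
  ∀ y ∈ K, (⟪g, y - z⟫) ≤ f z y + ε

/-- estimate for one projected subgradient step on the image space. -/
theorem stmt2 {H₁ H₂ : Type*}
    [NormedAddCommGroup H₁] [InnerProductSpace ℝ H₁] [CompleteSpace H₁]
    [NormedAddCommGroup H₂] [InnerProductSpace ℝ H₂] [CompleteSpace H₂]
    (Q : Set H₂) (hQne : Q.Nonempty) (hQcl : IsClosed Q) (hQcv : Convex ℝ Q)
    (A : H₁ →L[ℝ] H₂)
    (F : H₂ → H₂ → ℝ) (hF0 : ∀ u ∈ Q, F u u = 0)
    (x : H₁) (u : H₂) (hu : IsProjOn Q (A x) u)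
    (ε β ρ : ℝ) (hε : 0 ≤ ε) (hβ : 0 < β) (hρ : 0 < ρ)
    (w : H₂) (hw : IsDiagSubgrad Q F ε u w)
    (γ : ℝ) (hγ : γ = β / max ρ ‖w‖)
    (y : H₂) (hy : IsProjOn Q (u - γ • w) y) :
    ∀ xs : H₁, A xs ∈ Q → (∀ v ∈ Q, 0 ≤ F (A xs) v) →
      2 * (⟪A (x - xs), y - A x⟫) ≤
        -‖u - A x‖ ^ 2 - ‖y - A x‖ ^ 2 + 2 * γ * F u (A xs) + (2 * β * ε / ρ + 2 * β ^ 2) := by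
  intro xs hz hFz
  set a := A x with ha
  set z := A xs with hzdef
  have hmax : (0:ℝ) < max ρ ‖w‖ := lt_of_lt_of_le hρ (le_max_left _ _)
  have hγpos : 0 < γ := by rw [hγ]; positivity
  have hγw : γ * ‖w‖ ≤ β := by
    rw [hγ, div_mul_eq_mul_div, div_le_iff₀ hmax]
    calc β * ‖w‖ ≤ β * max ρ ‖w‖ := by
          exact mul_le_mul_of_nonneg_left (le_max_right _ _) hβ.le
      _ = β * max ρ ‖w‖ := rfl
  have hγρ : γ * ε ≤ β * ε / ρ := by
    rw [hγ, div_mul_eq_mul_div, div_le_div_iff₀ hmax hρ]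
    have hle := le_max_left ρ ‖w‖
    have : β * ε * ρ ≤ β * ε * max ρ ‖w‖ :=
      mul_le_mul_of_nonneg_left hle (by positivity)
    linarith
  -- projection inequality for u
  have hu2 : (⟪a - u, z - u⟫) ≤ 0 := hu.2 z hz
  have h1 : ‖u - z‖ ^ 2 ≤ ‖a - z‖ ^ 2 - ‖a - u‖ ^ 2 := by
    have hid : ‖a - z‖ ^ 2 = ‖a - u‖ ^ 2 + 2 * (⟪a - u, u - z⟫) + ‖u - z‖ ^ 2 := by
      have := norm_add_sq_real (a - u) (u - z)
      simpa [sub_add_sub_cancel] using this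
    have hneg : (⟪a - u, u - z⟫) = -(⟪a - u, z - u⟫) := by
      rw [← inner_neg_right, neg_sub]
    rw [hneg] at hid
    linarith
  -- projection inequality for y
  have hy2 : (⟪u - γ • w - y, z - y⟫) ≤ 0 := hy.2 z hz
  have h2 : ‖z - y‖ ^ 2 ≤ ‖u - γ • w - z‖ ^ 2 := by
    have hid : ‖u - γ • w - z‖ ^ 2 =
        ‖u - γ • w - y‖ ^ 2 - 2 * (⟪u - γ • w - y, z - y⟫) + ‖z - y‖ ^ 2 := by
      have := norm_sub_sq_real (u - γ • w - y) (z - y)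
      have heq : u - γ • w - y - (z - y) = u - γ • w - z := by abel
      rw [heq] at this
      linarith
    nlinarith [sq_nonneg ‖u - γ • w - y‖]
  have h3 : ‖u - γ • w - z‖ ^ 2 = ‖u - z‖ ^ 2 + 2 * γ * (⟪w, z - u⟫) + γ ^ 2 * ‖w‖ ^ 2 := by
    have heq : u - γ • w - z = (u - z) - γ • w := by abel
    rw [heq, norm_sub_sq_real, real_inner_smul_right, norm_smul, mul_pow]
    have : (⟪u - z, w⟫) = -(⟪w, z - u⟫) := by
      rw [real_inner_comm, ← inner_neg_right, neg_sub]
    rw [this]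
    simp [Real.norm_eq_abs, sq_abs]
    ring
  have h4 : (⟪w, z - u⟫) ≤ F u z + ε := hw z hz
  -- combine
  have h5 : ‖z - y‖ ^ 2 ≤ ‖a - z‖ ^ 2 - ‖a - u‖ ^ 2 + 2 * γ * (F u z + ε) + γ ^ 2 * ‖w‖ ^ 2 := by
    nlinarith
  have hsq : γ ^ 2 * ‖w‖ ^ 2 ≤ β ^ 2 := by
    have h0 : 0 ≤ γ * ‖w‖ := mul_nonneg hγpos.le (norm_nonneg w)
    calc γ ^ 2 * ‖w‖ ^ 2 = (γ * ‖w‖) ^ 2 := by ring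
      _ ≤ β ^ 2 := pow_le_pow_left₀ h0 hγw 2
  have hlhs : (⟪A (x - xs), y - a⟫) = (⟪y - a, a - z⟫) := by
    rw [map_sub, real_inner_comm]
  have hid2 : ‖y - z‖ ^ 2 = ‖y - a‖ ^ 2 + 2 * (⟪y - a, a - z⟫) + ‖a - z‖ ^ 2 := by
    have := norm_add_sq_real (y - a) (a - z)
    simpa [sub_add_sub_cancel] using this
  have hnorm : ‖y - z‖ = ‖z - y‖ := norm_sub_rev _ _
  have huax : ‖u - a‖ = ‖a - u‖ := norm_sub_rev _ _
  have hyz : ‖y - z‖ ^ 2 = ‖z - y‖ ^ 2 := by rw [hnorm]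
  rw [hlhs, huax]
  have hdiv : 2 * β * ε / ρ = 2 * (β * ε / ρ) := by ring
  linarith [h5, hsq, hγρ, hid2, hyz, sq_nonneg β, hdiv]
end

section
/- Let H₁, H₂ be real Hilbert spaces, C ⊆ H₁ and Q ⊆ H₂ nonempty closed convex, A : H₁ → H₂ a bounded linear operator with adjoint A*, and F : H₂×H₂ → ℝ a bifunction with F(u,u) = 0 for all u ∈ Q. Let x ∈ C, set u = P_Q(Ax), let ε ≥ 0, β > 0, ρ > 0, let w ∈ H₂ be an ε-diagonal subgradient of F at u over Q, set γ = β/max{ρ, ‖w‖}, y = P_Q(u − γ w), and for μ > 0 with μ‖A‖² ≤ 1 set z = P_C(x + μ A*(y − Ax)). Then for every x* ∈ C with Ax* ∈ EP(F,Q): ‖z − x*‖² ≤ ‖x − x*‖² − μ‖u − Ax‖² + 2μγ F(u, Ax*) + μδ, where δ = 2βε/ρ + 2β². -/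
open RealInnerProductSpace Filter

lemma proj_sq_ineq {H : Type*} [NormedAddCommGroup H] [InnerProductSpace ℝ H]
    {K : Set H} {v z : H} (hz : IsProjOn K v z) {q : H} (hq : q ∈ K) :
    ‖z - q‖ ^ 2 ≤ ‖v - q‖ ^ 2 - ‖v - z‖ ^ 2 := by
  have h := hz.2 q hq
  have e : v - q = (v - z) + (z - q) := by abel
  have hnorm := norm_add_sq_real (v - z) (z - q)
  rw [← e] at hnorm
  have h2 : (⟪v - z, z - q⟫ : ℝ) = - ⟪v - z, q - z⟫ := by
    rw [← inner_neg_right]; congr 1; abel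
  linarith [hnorm, h, h2.le, h2.ge]

set_option maxHeartbeats 2000000 in
/-- estimate (eq. (7)) for the step `z = P_C(x + μ A*(y − Ax))`. -/
theorem stmt3 {H₁ H₂ : Type*}
    [NormedAddCommGroup H₁] [InnerProductSpace ℝ H₁] [CompleteSpace H₁]
    [NormedAddCommGroup H₂] [InnerProductSpace ℝ H₂] [CompleteSpace H₂]
    (C : Set H₁) (hCne : C.Nonempty) (hCcl : IsClosed C) (hCcv : Convex ℝ C)
    (Q : Set H₂) (hQne : Q.Nonempty) (hQcl : IsClosed Q) (hQcv : Convex ℝ Q)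
    (A : H₁ →L[ℝ] H₂)
    (F : H₂ → H₂ → ℝ) (hF0 : ∀ u ∈ Q, F u u = 0)
    (x : H₁) (hx : x ∈ C) (u : H₂) (hu : IsProjOn Q (A x) u)
    (ε β ρ : ℝ) (hε : 0 ≤ ε) (hβ : 0 < β) (hρ : 0 < ρ)
    (w : H₂) (hw : IsDiagSubgrad Q F ε u w)
    (γ : ℝ) (hγ : γ = β / max ρ ‖w‖)
    (y : H₂) (hy : IsProjOn Q (u - γ • w) y)
    (μ : ℝ) (hμ : 0 < μ) (hμA : μ * ‖A‖ ^ 2 ≤ 1)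
    (z : H₁) (hz : IsProjOn C (x + μ • (ContinuousLinearMap.adjoint A) (y - A x)) z) :
    ∀ xs : H₁, xs ∈ C → A xs ∈ Q → (∀ v ∈ Q, 0 ≤ F (A xs) v) →
      ‖z - xs‖ ^ 2 ≤ ‖x - xs‖ ^ 2 - μ * ‖u - A x‖ ^ 2 + 2 * μ * γ * F u (A xs)
        + μ * (2 * β * ε / ρ + 2 * β ^ 2) := by
  intro xs hxs hAxs hEP
  -- basic facts about γ
  have hmax : 0 < max ρ ‖w‖ := lt_of_lt_of_le hρ (le_max_left _ _)
  have hγpos : 0 < γ := by rw [hγ]; positivity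
  have hγw : γ * ‖w‖ ≤ β := by
    rw [hγ, div_mul_eq_mul_div, div_le_iff₀ hmax]
    have : ‖w‖ ≤ max ρ ‖w‖ := le_max_right _ _
    nlinarith
  have hγρ : γ ≤ β / ρ := by
    rw [hγ]
    apply div_le_div_of_nonneg_left hβ.le hρ (le_max_left _ _)
  -- Step 5 : ‖u−Axs‖² ≤ ‖Ax−Axs‖² − ‖u−Ax‖²
  have h5 : ‖u - A xs‖ ^ 2 ≤ ‖A x - A xs‖ ^ 2 - ‖u - A x‖ ^ 2 := by
    have h := hu.2 (A xs) hAxs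
    have e : A x - A xs = (A x - u) + (u - A xs) := by abel
    have hnorm := norm_add_sq_real (A x - u) (u - A xs)
    rw [← e] at hnorm
    have h2 : (⟪A x - u, u - A xs⟫ : ℝ) = - ⟪A x - u, A xs - u⟫ := by
      rw [← inner_neg_right]; congr 1; abel
    have h3 : ‖A x - u‖ = ‖u - A x‖ := by rw [norm_sub_rev]
    rw [h3] at hnorm
    linarith [hnorm, h, h2.le, h2.ge]
  -- Step 4 : ‖y−Axs‖² ≤ ‖u−Axs‖² + 2γF(u,Axs) + 2γε + β²
  have h4 : ‖y - A xs‖ ^ 2 ≤ ‖u - A xs‖ ^ 2 + 2 * γ * F u (A xs) + 2 * γ * ε + β ^ 2 := by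
    have hproj := proj_sq_ineq hy hAxs
    have e1 : u - γ • w - A xs = (u - A xs) + (-γ) • w := by
      rw [neg_smul]; abel
    have e2 : u - γ • w - y = (u - y) + (-γ) • w := by
      rw [neg_smul]; abel
    have n1 := norm_add_sq_real (u - A xs) ((-γ) • w)
    have n2 := norm_add_sq_real (u - y) ((-γ) • w)
    rw [← e1] at n1
    rw [← e2] at n2
    have i1 : (⟪u - A xs, (-γ) • w⟫ : ℝ) = γ * ⟪w, A xs - u⟫ := by
      rw [real_inner_smul_right]
      have h' : (⟪u - A xs, w⟫ : ℝ) = - ⟪w, A xs - u⟫ := by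
        rw [real_inner_comm, ← inner_neg_right]; congr 1; abel
      rw [h']; ring
    have i2 : (⟪u - y, (-γ) • w⟫ : ℝ) = -(γ * ⟪u - y, w⟫) := by
      rw [real_inner_smul_right]; ring
    -- subgradient bound
    have hsub : (⟪w, A xs - u⟫ : ℝ) ≤ F u (A xs) + ε := hw (A xs) hAxs
    have hsub2 : γ * (⟪w, A xs - u⟫ : ℝ) ≤ γ * (F u (A xs) + ε) :=
      mul_le_mul_of_nonneg_left hsub hγpos.le
    -- Cauchy-Schwarz bound
    have hcs : (⟪u - y, w⟫ : ℝ) ≤ ‖u - y‖ * ‖w‖ := real_inner_le_norm _ _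
    have hb : 2 * (γ * (⟪u - y, w⟫ : ℝ)) ≤ ‖u - y‖ ^ 2 + β ^ 2 := by
      have h1 : 2 * γ * (⟪u - y, w⟫ : ℝ) ≤ 2 * (γ * ‖w‖) * ‖u - y‖ := by
        nlinarith [norm_nonneg (u - y), hcs]
      have h2 : 2 * (γ * ‖w‖) * ‖u - y‖ ≤ 2 * β * ‖u - y‖ := by
        nlinarith [norm_nonneg (u - y)]
      nlinarith [sq_nonneg (‖u - y‖ - β)]
    linarith [hproj, n1, n2, i1.le, i1.ge, i2.le, i2.ge, hsub2, hb]
  -- Step 1 : projection for z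
  set t := (ContinuousLinearMap.adjoint A) (y - A x) with ht
  have h1 : ‖z - xs‖ ^ 2 ≤ ‖x + μ • t - xs‖ ^ 2 := by
    have := proj_sq_ineq hz hxs
    nlinarith [sq_nonneg ‖x + μ • t - z‖]
  -- expand
  have e3 : x + μ • t - xs = (x - xs) + μ • t := by abel
  have n3 := norm_add_sq_real (x - xs) (μ • t)
  rw [← e3] at n3
  have i45 : (⟪x - xs, t⟫ : ℝ) = ⟪A x - A xs, y - A x⟫ := by
    rw [ht, ContinuousLinearMap.adjoint_inner_right, map_sub]
  have i3 : (⟪x - xs, μ • t⟫ : ℝ) = μ * ⟪A x - A xs, y - A x⟫ := by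
    rw [real_inner_smul_right, i45]
  -- identity 2⟪Ax−Axs, y−Ax⟫ = ‖y−Axs‖² − ‖y−Ax‖² − ‖Ax−Axs‖²
  have i6 : 2 * (⟪A x - A xs, y - A x⟫ : ℝ)
      = ‖y - A xs‖ ^ 2 - ‖y - A x‖ ^ 2 - ‖A x - A xs‖ ^ 2 := by
    have e4 : y - A xs = (y - A x) + (A x - A xs) := by abel
    have n4 := norm_add_sq_real (y - A x) (A x - A xs)
    rw [← e4] at n4
    have : (⟪A x - A xs, y - A x⟫ : ℝ) = ⟪y - A x, A x - A xs⟫ := real_inner_comm _ _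
    linarith
  have h6 : 2 * (μ * (⟪A x - A xs, y - A x⟫ : ℝ))
      = μ * ‖y - A xs‖ ^ 2 - μ * ‖y - A x‖ ^ 2 - μ * ‖A x - A xs‖ ^ 2 := by
    linear_combination μ * i6
  -- norm of t
  have hμt : ‖μ • t‖ ^ 2 ≤ μ * ‖y - A x‖ ^ 2 := by
    have htle : ‖t‖ ≤ ‖A‖ * ‖y - A x‖ := by
      have h' := (ContinuousLinearMap.adjoint A).le_opNorm (y - A x)
      have hn : ‖ContinuousLinearMap.adjoint A‖ = ‖A‖ :=
        LinearIsometryEquiv.norm_map ContinuousLinearMap.adjoint A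
      rw [hn] at h'
      exact h'
    have h0 : ‖μ • t‖ ^ 2 = μ ^ 2 * ‖t‖ ^ 2 := by
      rw [norm_smul, Real.norm_eq_abs, mul_pow, sq_abs]
    have h1 : ‖t‖ ^ 2 ≤ ‖A‖ ^ 2 * ‖y - A x‖ ^ 2 := by
      nlinarith [norm_nonneg t, norm_nonneg (y - A x), norm_nonneg A]
    have h2 : μ ^ 2 * ‖A‖ ^ 2 ≤ μ := by nlinarith
    nlinarith [sq_nonneg ‖y - A x‖, sq_nonneg μ]
  -- scaled inequalities
  have h4μ := mul_le_mul_of_nonneg_left h4 hμ.le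
  have h5μ := mul_le_mul_of_nonneg_left h5 hμ.le
  have herr : 2 * γ * ε ≤ 2 * β * ε / ρ := by
    rw [div_eq_mul_inv]
    have : γ ≤ β * ρ⁻¹ := by rwa [← div_eq_mul_inv]
    nlinarith
  have herrμ := mul_le_mul_of_nonneg_left herr hμ.le
  have hβ2 : β ^ 2 ≤ 2 * β ^ 2 := by nlinarith
  have hβ2μ := mul_le_mul_of_nonneg_left hβ2 hμ.le
  -- combine
  linarith [h1, n3, i3.le, i3.ge, h6, hμt, h4μ, h5μ, herrμ, hβ2μ]
end

section
/- Let H₁, H₂ be real Hilbert spaces, C ⊆ H₁ and Q ⊆ H₂ nonempty closed convex, A : H₁ → H₂ a bounded linear operator with adjoint A*, and f : H₁×H₁ → ℝ, F : H₂×H₂ → ℝ bifunctions with f(x,x) = 0 for x ∈ C and F(u,u) = 0 for u ∈ Q. Let x ∈ C, ε ≥ 0, β > 0, ρ > 0, and μ > 0 with μ‖A‖² ≤ 1. Set u = P_Q(Ax); let w be an ε-diagonal subgradient of F at u over Q; set γ = β/max{ρ, ‖w‖} and y = P_Q(u − γ w); set z = P_C(x + μ A*(y − Ax)); let g be an ε-diagonal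 subgradient of f at z over C; set α = β/max{ρ, ‖g‖} and x⁺ = P_C(z − α g). Then for every x* ∈ Ω (i.e., x* ∈ EP(f,C) with Ax* ∈ EP(F,Q)): ‖x⁺ − x*‖² ≤ ‖x − x*‖² − μ‖u − Ax‖² − ‖x⁺ − z‖² + 2μγ F(u, Ax*) + 2α f(z, x*) + (1 + μ)δ, where δ = 2βε/ρ + 2β². -/
open RealInnerProductSpace Filter

lemma stmt4_cosine {H : Type*} [NormedAddCommGroup H] [InnerProductSpace ℝ H] (a b c : H) :
    ‖a - c‖ ^ 2 = ‖a - b‖ ^ 2 + ‖b - c‖ ^ 2 + 2 * ⟪a - b, b - c⟫ := by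
  rw [show a - c = (a - b) + (b - c) by abel, @norm_add_sq_real]
  ring

lemma stmt4_adj_norm {H₁ H₂ : Type*}
    [NormedAddCommGroup H₁] [InnerProductSpace ℝ H₁] [CompleteSpace H₁]
    [NormedAddCommGroup H₂] [InnerProductSpace ℝ H₂] [CompleteSpace H₂]
    (A : H₁ →L[ℝ] H₂) (v : H₂) :
    ‖(ContinuousLinearMap.adjoint A) v‖ ≤ ‖A‖ * ‖v‖ := by
  calc ‖(ContinuousLinearMap.adjoint A) v‖ ≤ ‖ContinuousLinearMap.adjoint A‖ * ‖v‖ :=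
        (ContinuousLinearMap.adjoint A).le_opNorm v
    _ = ‖A‖ * ‖v‖ := by rw [ContinuousLinearMap.adjoint.norm_map A]

lemma stmt4_step {H : Type*} [NormedAddCommGroup H] [InnerProductSpace ℝ H]
    (K : Set H) (q d p s : H) (c b : ℝ) (hc : 0 < c) (hcd : c * ‖d‖ ≤ b)
    (hq : q ∈ K) (hs : s ∈ K)
    (hp : p ∈ K ∧ ∀ y ∈ K, (⟪q - c • d - p, y - p⟫) ≤ 0) :
    ‖p - s‖ ^ 2 ≤ ‖q - s‖ ^ 2 - ‖p - q‖ ^ 2 + 2 * c * ⟪d, s - q⟫ + 2 * b ^ 2 := by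
  have hb : 0 ≤ b := le_trans (mul_nonneg hc.le (norm_nonneg d)) hcd
  have h1 : ⟪q - c • d - p, q - p⟫ ≤ 0 := hp.2 q hq
  have e1 : ⟪q - c • d - p, q - p⟫ = ⟪q - p, q - p⟫ - c * ⟪d, q - p⟫ := by
    rw [show q - c • d - p = (q - p) - c • d by abel, inner_sub_left, real_inner_smul_left]
  have h2 : ‖q - p‖ ^ 2 ≤ c * ⟪d, q - p⟫ := by
    rw [e1] at h1
    have := real_inner_self_eq_norm_sq (q - p)
    linarith
  have hqp : ‖q - p‖ ≤ c * ‖d‖ := by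
    have hcs : ⟪d, q - p⟫ ≤ ‖d‖ * ‖q - p‖ := real_inner_le_norm d (q - p)
    nlinarith [norm_nonneg (q - p), mul_nonneg hc.le (norm_nonneg d)]
  have h3 : ⟪q - c • d - p, s - p⟫ ≤ 0 := hp.2 s hs
  have e3 : ⟪q - c • d - p, s - p⟫ = ⟪q - p, s - p⟫ - c * ⟪d, s - p⟫ := by
    rw [show q - c • d - p = (q - p) - c • d by abel, inner_sub_left, real_inner_smul_left]
  have h4 : ⟪q - p, s - p⟫ ≤ c * ⟪d, s - p⟫ := by rw [e3] at h3; linarith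
  have e5 : ⟪d, s - p⟫ = ⟪d, s - q⟫ + ⟪d, q - p⟫ := by
    rw [show s - p = (s - q) + (q - p) by abel, inner_add_right]
  have h6 : c * ⟪d, q - p⟫ ≤ b ^ 2 := by
    have hcs : ⟪d, q - p⟫ ≤ ‖d‖ * ‖q - p‖ := real_inner_le_norm d (q - p)
    nlinarith [norm_nonneg (q - p), norm_nonneg d]
  have hco : ‖q - s‖ ^ 2 = ‖q - p‖ ^ 2 + ‖p - s‖ ^ 2 + 2 * ⟪q - p, p - s⟫ :=
    stmt4_cosine q p s
  have e7 : ⟪q - p, p - s⟫ = - ⟪q - p, s - p⟫ := by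
    rw [show p - s = -(s - p) by abel, inner_neg_right]
  have e8 : ‖p - q‖ = ‖q - p‖ := norm_sub_rev p q
  rw [e8]
  nlinarith [h4, h6, e5]

set_option maxHeartbeats 1000000 in
/-- Lemma 3.5: the key one-iteration estimate for the projection
algorithm for the split equilibrium problem. -/
theorem stmt4 {H₁ H₂ : Type*}
    [NormedAddCommGroup H₁] [InnerProductSpace ℝ H₁] [CompleteSpace H₁]
    [NormedAddCommGroup H₂] [InnerProductSpace ℝ H₂] [CompleteSpace H₂]
    (C : Set H₁) (hCne : C.Nonempty) (hCcl : IsClosed C) (hCcv : Convex ℝ C)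
    (Q : Set H₂) (hQne : Q.Nonempty) (hQcl : IsClosed Q) (hQcv : Convex ℝ Q)
    (A : H₁ →L[ℝ] H₂)
    (f : H₁ → H₁ → ℝ) (hf0 : ∀ x ∈ C, f x x = 0)
    (F : H₂ → H₂ → ℝ) (hF0 : ∀ u ∈ Q, F u u = 0)
    (x : H₁) (hx : x ∈ C)
    (ε β ρ μ : ℝ) (hε : 0 ≤ ε) (hβ : 0 < β) (hρ : 0 < ρ)
    (hμ : 0 < μ) (hμA : μ * ‖A‖ ^ 2 ≤ 1)
    (u : H₂) (hu : IsProjOn Q (A x) u)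
    (w : H₂) (hw : IsDiagSubgrad Q F ε u w)
    (γ : ℝ) (hγ : γ = β / max ρ ‖w‖)
    (y : H₂) (hy : IsProjOn Q (u - γ • w) y)
    (z : H₁) (hz : IsProjOn C (x + μ • (ContinuousLinearMap.adjoint A) (y - A x)) z)
    (g : H₁) (hg : IsDiagSubgrad C f ε z g)
    (α : ℝ) (hα : α = β / max ρ ‖g‖)
    (xp : H₁) (hxp : IsProjOn C (z - α • g) xp) :
    ∀ xs : H₁, xs ∈ C → (∀ y' ∈ C, 0 ≤ f xs y') → A xs ∈ Q → (∀ v ∈ Q, 0 ≤ F (A xs) v) →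
      ‖xp - xs‖ ^ 2 ≤ ‖x - xs‖ ^ 2 - μ * ‖u - A x‖ ^ 2 - ‖xp - z‖ ^ 2
        + 2 * μ * γ * F u (A xs) + 2 * α * f z xs
        + (1 + μ) * (2 * β * ε / ρ + 2 * β ^ 2) := by
  intro xs hxsC _ hAxsQ _
  -- properties of γ and α
  have hmw : (0:ℝ) < max ρ ‖w‖ := lt_max_of_lt_left hρ
  have hmg : (0:ℝ) < max ρ ‖g‖ := lt_max_of_lt_left hρ
  have hγpos : 0 < γ := by rw [hγ]; positivity
  have hαpos : 0 < α := by rw [hα]; positivity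
  have hγw : γ * ‖w‖ ≤ β := by
    rw [hγ, div_mul_eq_mul_div, div_le_iff₀ hmw]
    exact mul_le_mul_of_nonneg_left (le_max_right _ _) hβ.le
  have hαg : α * ‖g‖ ≤ β := by
    rw [hα, div_mul_eq_mul_div, div_le_iff₀ hmg]
    exact mul_le_mul_of_nonneg_left (le_max_right _ _) hβ.le
  have hγρ : γ ≤ β / ρ := by
    rw [hγ]
    exact div_le_div_of_nonneg_left hβ.le hρ (le_max_left _ _)
  have hαρ : α ≤ β / ρ := by
    rw [hα]
    exact div_le_div_of_nonneg_left hβ.le hρ (le_max_left _ _)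
  have hγε : γ * ε ≤ β * ε / ρ := by
    calc γ * ε ≤ (β / ρ) * ε := mul_le_mul_of_nonneg_right hγρ hε
      _ = β * ε / ρ := by ring
  have hαε : α * ε ≤ β * ε / ρ := by
    calc α * ε ≤ (β / ρ) * ε := mul_le_mul_of_nonneg_right hαρ hε
      _ = β * ε / ρ := by ring
  -- Step 1: inner step in H₂
  have hstep1 := stmt4_step Q u w y (A xs) γ β hγpos hγw hu.1 hAxsQ hy
  have hsub1 : ⟪w, A xs - u⟫ ≤ F u (A xs) + ε := hw (A xs) hAxsQ
  have h1 : ‖y - A xs‖ ^ 2 ≤ ‖u - A xs‖ ^ 2 + 2 * γ * F u (A xs)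
      + (2 * β * ε / ρ + 2 * β ^ 2) := by
    have := mul_le_mul_of_nonneg_left hsub1 hγpos.le
    have hsq : (0:ℝ) ≤ ‖y - u‖ ^ 2 := sq_nonneg _
    ring_nf at this hγε hstep1 hsq ⊢
    linarith
  -- Step 2: firm projection for u
  have h2 : ‖u - A xs‖ ^ 2 ≤ ‖A x - A xs‖ ^ 2 - ‖u - A x‖ ^ 2 := by
    have hp : ⟪A x - u, A xs - u⟫ ≤ 0 := hu.2 (A xs) hAxsQ
    have hco : ‖A x - A xs‖ ^ 2
        = ‖A x - u‖ ^ 2 + ‖u - A xs‖ ^ 2 + 2 * ⟪A x - u, u - A xs⟫ :=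
      stmt4_cosine (A x) u (A xs)
    have e : ⟪A x - u, u - A xs⟫ = - ⟪A x - u, A xs - u⟫ := by
      rw [show u - A xs = -(A xs - u) by abel, inner_neg_right]
    have e2 : ‖u - A x‖ = ‖A x - u‖ := norm_sub_rev u (A x)
    rw [e2]
    linarith [e ▸ hco]
  -- Step 3: going back to H₁
  set v : H₁ := (ContinuousLinearMap.adjoint A) (y - A x) with hv
  have h3 : ‖z - xs‖ ^ 2 ≤ ‖x - xs‖ ^ 2 + μ * ‖y - A xs‖ ^ 2 - μ * ‖A x - A xs‖ ^ 2 := by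
    set t : H₁ := x + μ • v with ht
    have hp : ⟪t - z, xs - z⟫ ≤ 0 := hz.2 xs hxsC
    have hco : ‖t - xs‖ ^ 2 = ‖t - z‖ ^ 2 + ‖z - xs‖ ^ 2 + 2 * ⟪t - z, z - xs⟫ :=
      stmt4_cosine t z xs
    have e : ⟪t - z, z - xs⟫ = - ⟪t - z, xs - z⟫ := by
      rw [show z - xs = -(xs - z) by abel, inner_neg_right]
    have hzt : ‖z - xs‖ ^ 2 ≤ ‖t - xs‖ ^ 2 := by
      rw [e] at hco
      nlinarith [sq_nonneg ‖t - z‖]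
    have hexp : ‖t - xs‖ ^ 2 = ‖x - xs‖ ^ 2 + 2 * μ * ⟪v, x - xs⟫ + μ ^ 2 * ‖v‖ ^ 2 := by
      rw [show t - xs = (x - xs) + μ • v by rw [ht]; abel, @norm_add_sq_real]
      rw [real_inner_smul_right, norm_smul, real_inner_comm]
      rw [Real.norm_eq_abs, abs_of_pos hμ]
      ring
    have hinner : ⟪v, x - xs⟫ = ⟪y - A x, A x - A xs⟫ := by
      rw [hv, ContinuousLinearMap.adjoint_inner_left, map_sub]
    have hid : 2 * ⟪y - A x, A x - A xs⟫
        = ‖y - A xs‖ ^ 2 - ‖y - A x‖ ^ 2 - ‖A x - A xs‖ ^ 2 := by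
      have := @norm_add_sq_real _ _ _ (y - A x) (A x - A xs)
      rw [show (y - A x) + (A x - A xs) = y - A xs by abel] at this
      linarith
    have hvbd : ‖v‖ ≤ ‖A‖ * ‖y - A x‖ := stmt4_adj_norm A (y - A x)
    have hv2 : μ ^ 2 * ‖v‖ ^ 2 ≤ μ * ‖y - A x‖ ^ 2 := by
      have h' : ‖v‖ ^ 2 ≤ ‖A‖ ^ 2 * ‖y - A x‖ ^ 2 := by
        nlinarith [norm_nonneg v, norm_nonneg (y - A x), norm_nonneg A]
      calc μ ^ 2 * ‖v‖ ^ 2 ≤ μ ^ 2 * (‖A‖ ^ 2 * ‖y - A x‖ ^ 2) :=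
            mul_le_mul_of_nonneg_left h' (sq_nonneg μ)
        _ = (μ * ‖A‖ ^ 2) * (μ * ‖y - A x‖ ^ 2) := by ring
        _ ≤ 1 * (μ * ‖y - A x‖ ^ 2) :=
            mul_le_mul_of_nonneg_right hμA (mul_nonneg hμ.le (sq_nonneg _))
        _ = μ * ‖y - A x‖ ^ 2 := one_mul _
    calc ‖z - xs‖ ^ 2 ≤ ‖t - xs‖ ^ 2 := hzt
      _ = ‖x - xs‖ ^ 2 + 2 * μ * ⟪y - A x, A x - A xs⟫ + μ ^ 2 * ‖v‖ ^ 2 := by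
          rw [hexp, hinner]
      _ = ‖x - xs‖ ^ 2 + μ * (‖y - A xs‖ ^ 2 - ‖y - A x‖ ^ 2 - ‖A x - A xs‖ ^ 2)
            + μ ^ 2 * ‖v‖ ^ 2 := by
          rw [show 2 * μ * ⟪y - A x, A x - A xs⟫ = μ * (2 * ⟪y - A x, A x - A xs⟫) by ring,
            hid]
      _ ≤ ‖x - xs‖ ^ 2 + μ * ‖y - A xs‖ ^ 2 - μ * ‖A x - A xs‖ ^ 2 := by
          nlinarith [hv2]
  -- Step 4: outer step in H₁
  have hstep4 := stmt4_step C z g xp xs α β hαpos hαg hz.1 hxsC hxp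
  have hsub4 : ⟪g, xs - z⟫ ≤ f z xs + ε := hg xs hxsC
  have h4 : ‖xp - xs‖ ^ 2 ≤ ‖z - xs‖ ^ 2 - ‖xp - z‖ ^ 2 + 2 * α * f z xs
      + (2 * β * ε / ρ + 2 * β ^ 2) := by
    have := mul_le_mul_of_nonneg_left hsub4 hαpos.le
    ring_nf at this hαε hstep4 ⊢
    linarith
  -- combine
  have h5 : μ * ‖y - A xs‖ ^ 2 ≤ μ * ‖A x - A xs‖ ^ 2 - μ * ‖u - A x‖ ^ 2
      + 2 * μ * γ * F u (A xs) + μ * (2 * β * ε / ρ + 2 * β ^ 2) := by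
    have ha := mul_le_mul_of_nonneg_left h1 hμ.le
    have hb := mul_le_mul_of_nonneg_left h2 hμ.le
    ring_nf at ha hb ⊢
    linarith
  ring_nf at h3 h4 h5 ⊢
  linarith
end

section
/- In the split equilibrium setting, assume f is pseudomonotone on C, F is pseudomonotone on Q, and the solution set Ω is nonempty. Let {x_n} be any sequence generated by the projection algorithm with parameter sequences satisfying ρ_n ≥ ρ > 0, ε_n ≥ 0, β_n > 0, Σ β_n ε_n/ρ_n < ∞, Σ β_n² < ∞, and 0 < a ≤ μ_n with μ_n‖A‖² ≤ 1. Then for each x* ∈ Ω the sequence {‖x_n − x*‖²} converges to a finite limit, and the sequence {x_n} is bounded. -/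
open RealInnerProductSpace Filter

set_option maxHeartbeats 2000000

lemma aux_proj_sq {H : Type*} [NormedAddCommGroup H] [InnerProductSpace ℝ H]
    {K : Set H} {v z q : H} (h : IsProjOn K v z) (hq : q ∈ K) :
    ‖z - q‖ ^ 2 ≤ ‖v - q‖ ^ 2 - ‖v - z‖ ^ 2 := by
  have h1 := h.2 q hq
  have h2 : v - q = (v - z) + (z - q) := by abel
  rw [h2, norm_add_sq_real]
  have h3 : ⟪v - z, z - q⟫ = -⟪v - z, q - z⟫ := by
    rw [← inner_neg_right]; congr 1; abel
  rw [h3]; linarith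

lemma aux_step {H : Type*} [NormedAddCommGroup H] [InnerProductSpace ℝ H]
    {K : Set H} {u y q w : H} {γ β ε : ℝ}
    (hy : IsProjOn K (u - γ • w) y) (hq : q ∈ K)
    (hwq : ⟪w, q - u⟫ ≤ ε) (hγ : 0 ≤ γ) (hγw : γ * ‖w‖ ≤ β) :
    ‖y - q‖ ^ 2 ≤ ‖u - q‖ ^ 2 + 2 * γ * ε + β ^ 2 := by
  have h0 := aux_proj_sq hy hq
  have e1 : u - γ • w - q = (u - q) - γ • w := by abel
  have e2 : u - γ • w - y = (u - y) - γ • w := by abel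
  rw [e1, e2] at h0
  have E1 : ‖(u - q) - γ • w‖ ^ 2
      = ‖u - q‖ ^ 2 - 2 * (γ * ⟪u - q, w⟫) + ‖γ • w‖ ^ 2 := by
    rw [norm_sub_sq_real, real_inner_smul_right]
  have E2 : ‖(u - y) - γ • w‖ ^ 2
      = ‖u - y‖ ^ 2 - 2 * (γ * ⟪u - y, w⟫) + ‖γ • w‖ ^ 2 := by
    rw [norm_sub_sq_real, real_inner_smul_right]
  have hc : ⟪u - y, w⟫ - ⟪u - q, w⟫ = ⟪w, q - u⟫ + ⟪w, u - y⟫ := by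
    simp only [inner_sub_left, inner_sub_right, real_inner_comm w]
    ring
  have hc' : γ * ⟪u - y, w⟫ - γ * ⟪u - q, w⟫ = γ * ⟪w, q - u⟫ + γ * ⟪w, u - y⟫ := by
    rw [← mul_sub, hc, mul_add]
  have hγε : γ * ⟪w, q - u⟫ ≤ γ * ε := mul_le_mul_of_nonneg_left hwq hγ
  have hb : γ * ⟪w, u - y⟫ ≤ β * ‖u - y‖ := by
    calc γ * ⟪w, u - y⟫ ≤ γ * (‖w‖ * ‖u - y‖) :=
          mul_le_mul_of_nonneg_left (real_inner_le_norm w (u - y)) hγ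
      _ = (γ * ‖w‖) * ‖u - y‖ := by ring
      _ ≤ β * ‖u - y‖ := mul_le_mul_of_nonneg_right hγw (norm_nonneg _)
  nlinarith [sq_nonneg (β - ‖u - y‖)]

/-- Lemma 3.6(i): Fejér-type monotonicity of the projection
algorithm: `‖x_n − x*‖²` converges for each solution `x*` and `{x_n}` is bounded. -/
theorem stmt5 {H₁ H₂ : Type*}
    [NormedAddCommGroup H₁] [InnerProductSpace ℝ H₁] [CompleteSpace H₁]
    [NormedAddCommGroup H₂] [InnerProductSpace ℝ H₂] [CompleteSpace H₂]
    (C : Set H₁) (hCne : C.Nonempty) (hCcl : IsClosed C) (hCcv : Convex ℝ C)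
    (Q : Set H₂) (hQne : Q.Nonempty) (hQcl : IsClosed Q) (hQcv : Convex ℝ Q)
    (A : H₁ →L[ℝ] H₂)
    (f : H₁ → H₁ → ℝ) (hf0 : ∀ x ∈ C, f x x = 0)
    (F : H₂ → H₂ → ℝ) (hF0 : ∀ u ∈ Q, F u u = 0)
    (hfpm : ∀ x ∈ C, ∀ y ∈ C, 0 ≤ f x y → f y x ≤ 0)
    (hFpm : ∀ u ∈ Q, ∀ v ∈ Q, 0 ≤ F u v → F v u ≤ 0)
    (ρseq εseq βseq μseq : ℕ → ℝ) (ρ a : ℝ)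
    (hρ : 0 < ρ) (hρn : ∀ n, ρ ≤ ρseq n)
    (hεn : ∀ n, 0 ≤ εseq n) (hβn : ∀ n, 0 < βseq n)
    (hsum1 : Summable (fun n => βseq n * εseq n / ρseq n))
    (hsum2 : Summable (fun n => (βseq n) ^ 2))
    (ha : 0 < a) (hμn : ∀ n, a ≤ μseq n) (hμA : ∀ n, μseq n * ‖A‖ ^ 2 ≤ 1)
    (x : ℕ → H₁) (u y w : ℕ → H₂) (z g : ℕ → H₁) (γ α : ℕ → ℝ)
    (hx0 : x 0 ∈ C)
    (hu : ∀ n, IsProjOn Q (A (x n)) (u n))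
    (hw : ∀ n, IsDiagSubgrad Q F (εseq n) (u n) (w n))
    (hγ : ∀ n, γ n = βseq n / max (ρseq n) ‖w n‖)
    (hy : ∀ n, IsProjOn Q (u n - γ n • w n) (y n))
    (hz : ∀ n, IsProjOn C
      (x n + μseq n • (ContinuousLinearMap.adjoint A) (y n - A (x n))) (z n))
    (hg : ∀ n, IsDiagSubgrad C f (εseq n) (z n) (g n))
    (hα : ∀ n, α n = βseq n / max (ρseq n) ‖g n‖)
    (hxn : ∀ n, IsProjOn C (z n - α n • g n) (x (n + 1)))
    (hΩne : ∃ xs, xs ∈ C ∧ (∀ y' ∈ C, 0 ≤ f xs y') ∧ A xs ∈ Q ∧ ∀ v ∈ Q, 0 ≤ F (A xs) v) :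
    (∀ xs, xs ∈ C → (∀ y' ∈ C, 0 ≤ f xs y') → A xs ∈ Q → (∀ v ∈ Q, 0 ≤ F (A xs) v) →
      ∃ l : ℝ, Tendsto (fun n => ‖x n - xs‖ ^ 2) atTop (nhds l)) ∧
    ∃ M : ℝ, ∀ n, ‖x n‖ ≤ M := by
  set A' := ContinuousLinearMap.adjoint A with hA'
  have hρn' : ∀ n, 0 < ρseq n := fun n => lt_of_lt_of_le hρ (hρn n)
  set s : ℕ → ℝ := fun n => 2 * (βseq n * εseq n / ρseq n) + βseq n ^ 2 with hsdef
  have hs_nonneg : ∀ n, 0 ≤ s n := by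
    intro n
    have h1 := hβn n; have h2 := hεn n; have h3 := hρn' n
    have : 0 ≤ βseq n * εseq n / ρseq n := by positivity
    simp only [hsdef]; positivity
  have hssum : Summable s := (hsum1.mul_left 2).add hsum2
  set b : ℝ := (‖A‖ ^ 2)⁻¹ with hb
  have hbnn : 0 ≤ b := by rw [hb]; positivity
  -- the key one-step Fejér inequality
  have key : ∀ p, p ∈ C → (∀ y' ∈ C, 0 ≤ f p y') → A p ∈ Q → (∀ v ∈ Q, 0 ≤ F (A p) v) →
      ∀ n, ‖x (n + 1) - p‖ ^ 2 ≤ ‖x n - p‖ ^ 2 + (b + 1) * s n := by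
    intro p hpC hfp hApQ hFp n
    obtain ⟨huQ, -⟩ := hu n
    obtain ⟨hzC, -⟩ := hz n
    have hρpos := hρn' n
    have hβpos := hβn n
    have hsn : s n = 2 * (βseq n * εseq n / ρseq n) + βseq n ^ 2 := by simp [hsdef]
    -- step-size facts for γ
    have hMw : 0 < max (ρseq n) ‖w n‖ := lt_max_of_lt_left hρpos
    have hγnn : 0 ≤ γ n := by rw [hγ n]; positivity
    have hγw : γ n * ‖w n‖ ≤ βseq n := by
      rw [hγ n, div_mul_eq_mul_div, div_le_iff₀ hMw]
      exact mul_le_mul_of_nonneg_left (le_max_right _ _) hβpos.le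
    have hγρ : γ n ≤ βseq n / ρseq n := by
      rw [hγ n]
      gcongr
      exact le_max_left _ _
    -- step-size facts for α
    have hMg : 0 < max (ρseq n) ‖g n‖ := lt_max_of_lt_left hρpos
    have hαnn : 0 ≤ α n := by rw [hα n]; positivity
    have hαg : α n * ‖g n‖ ≤ βseq n := by
      rw [hα n, div_mul_eq_mul_div, div_le_iff₀ hMg]
      exact mul_le_mul_of_nonneg_left (le_max_right _ _) hβpos.le
    have hαρ : α n ≤ βseq n / ρseq n := by
      rw [hα n]
      gcongr
      exact le_max_left _ _
    -- bound on ‖y n - A p‖²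
    have hFle : F (u n) (A p) ≤ 0 := hFpm (A p) hApQ (u n) huQ (hFp (u n) huQ)
    have hwq : ⟪w n, A p - u n⟫ ≤ εseq n := by
      have := hw n (A p) hApQ; linarith
    have h2 : ‖y n - A p‖ ^ 2 ≤ ‖u n - A p‖ ^ 2 + 2 * γ n * εseq n + βseq n ^ 2 :=
      aux_step (hy n) hApQ hwq hγnn hγw
    have h1 : ‖u n - A p‖ ^ 2 ≤ ‖A (x n) - A p‖ ^ 2 - ‖A (x n) - u n‖ ^ 2 :=
      aux_proj_sq (hu n) hApQ
    have h2γ : 2 * γ n * εseq n ≤ 2 * (βseq n * εseq n / ρseq n) := by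
      have h := mul_le_mul_of_nonneg_right hγρ (hεn n)
      rw [div_mul_eq_mul_div] at h
      linarith
    have hyb : ‖y n - A p‖ ^ 2 ≤ ‖A (x n) - A p‖ ^ 2 + s n := by
      have := sq_nonneg ‖A (x n) - u n‖
      rw [hsn]; linarith
    -- bound on ‖z n - p‖²
    have hmu : 0 < μseq n := lt_of_lt_of_le ha (hμn n)
    have hznorm : ‖z n - p‖ ^ 2 ≤ ‖x n + μseq n • A' (y n - A (x n)) - p‖ ^ 2 := by
      have h := aux_proj_sq (hz n) hpC
      have := sq_nonneg ‖x n + μseq n • A' (y n - A (x n)) - z n‖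
      linarith
    have hexp : x n + μseq n • A' (y n - A (x n)) - p
        = (x n - p) + μseq n • A' (y n - A (x n)) := by abel
    have hinner : ⟪x n - p, A' (y n - A (x n))⟫ = ⟪A (x n) - A p, y n - A (x n)⟫ := by
      rw [hA', ContinuousLinearMap.adjoint_inner_right, map_sub]
    have hnorm_smul : ‖μseq n • A' (y n - A (x n))‖ ^ 2
        = μseq n ^ 2 * ‖A' (y n - A (x n))‖ ^ 2 := by
      rw [norm_smul, Real.norm_eq_abs, abs_of_pos hmu, mul_pow]
    have hAd : ‖A' (y n - A (x n))‖ ≤ ‖A‖ * ‖y n - A (x n)‖ := by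
      calc ‖A' (y n - A (x n))‖ ≤ ‖A'‖ * ‖y n - A (x n)‖ := A'.le_opNorm _
        _ = ‖A‖ * ‖y n - A (x n)‖ := by
            rw [hA', ContinuousLinearMap.adjoint.norm_map A]
    have hexp2 : ‖x n + μseq n • A' (y n - A (x n)) - p‖ ^ 2
        = ‖x n - p‖ ^ 2 + 2 * (μseq n * ⟪A (x n) - A p, y n - A (x n)⟫)
          + μseq n ^ 2 * ‖A' (y n - A (x n))‖ ^ 2 := by
      rw [hexp, norm_add_sq_real, real_inner_smul_right, hinner, hnorm_smul]
    have hzb : ‖z n - p‖ ^ 2 ≤ ‖x n - p‖ ^ 2 + b * s n := by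
      rcases eq_or_lt_of_le (norm_nonneg A) with hA0 | hApos
      · -- degenerate case ‖A‖ = 0
        have hA0' : ‖A‖ = 0 := hA0.symm
        have hAd0 : A' (y n - A (x n)) = 0 := by
          have h := hAd
          rw [hA0', zero_mul] at h
          exact norm_le_zero_iff.mp h
        rw [hexp, hAd0, smul_zero, add_zero] at hznorm
        have := mul_nonneg hbnn (hs_nonneg n)
        linarith
      · have hA2pos : 0 < ‖A‖ ^ 2 := by positivity
        have hμb : μseq n ≤ b := by
          rw [hb, inv_eq_one_div, le_div_iff₀ hA2pos]
          exact hμA n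
        have hpol : 2 * ⟪A (x n) - A p, y n - A (x n)⟫
            = ‖y n - A p‖ ^ 2 - ‖A (x n) - A p‖ ^ 2 - ‖y n - A (x n)‖ ^ 2 := by
          have h := norm_add_sq_real (A (x n) - A p) (y n - A (x n))
          have he : A (x n) - A p + (y n - A (x n)) = y n - A p := by abel
          rw [he] at h; linarith
        have p0 : 2 * (μseq n * ⟪A (x n) - A p, y n - A (x n)⟫)
            = μseq n * (‖y n - A p‖ ^ 2 - ‖A (x n) - A p‖ ^ 2)
              - μseq n * ‖y n - A (x n)‖ ^ 2 := by
          linear_combination μseq n * hpol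
        have hAd2 : ‖A' (y n - A (x n))‖ ^ 2 ≤ ‖A‖ ^ 2 * ‖y n - A (x n)‖ ^ 2 := by
          have h := pow_le_pow_left₀ (norm_nonneg _) hAd 2
          rwa [mul_pow] at h
        have hμA2 : μseq n ^ 2 * ‖A‖ ^ 2 ≤ μseq n := by
          have h : μseq n ^ 2 * ‖A‖ ^ 2 = μseq n * (μseq n * ‖A‖ ^ 2) := by ring
          rw [h]
          calc μseq n * (μseq n * ‖A‖ ^ 2) ≤ μseq n * 1 :=
                mul_le_mul_of_nonneg_left (hμA n) hmu.le
            _ = μseq n := mul_one _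
        have p1 : μseq n * (‖y n - A p‖ ^ 2 - ‖A (x n) - A p‖ ^ 2) ≤ μseq n * s n :=
          mul_le_mul_of_nonneg_left (by linarith) hmu.le
        have p2 : μseq n ^ 2 * ‖A' (y n - A (x n))‖ ^ 2
            ≤ μseq n ^ 2 * (‖A‖ ^ 2 * ‖y n - A (x n)‖ ^ 2) :=
          mul_le_mul_of_nonneg_left hAd2 (sq_nonneg _)
        have p3 : μseq n ^ 2 * (‖A‖ ^ 2 * ‖y n - A (x n)‖ ^ 2)
            = (μseq n ^ 2 * ‖A‖ ^ 2) * ‖y n - A (x n)‖ ^ 2 := by ring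
        have p4 : (μseq n ^ 2 * ‖A‖ ^ 2) * ‖y n - A (x n)‖ ^ 2
            ≤ μseq n * ‖y n - A (x n)‖ ^ 2 :=
          mul_le_mul_of_nonneg_right hμA2 (sq_nonneg _)
        have p5 : μseq n * s n ≤ b * s n :=
          mul_le_mul_of_nonneg_right hμb (hs_nonneg n)
        linarith [hznorm, hexp2.le, p0.le]
    -- final step
    have hfle : f (z n) p ≤ 0 := hfpm p hpC (z n) hzC (hfp (z n) hzC)
    have hgq : ⟪g n, p - z n⟫ ≤ εseq n := by
      have := hg n p hpC; linarith
    have h4 : ‖x (n + 1) - p‖ ^ 2 ≤ ‖z n - p‖ ^ 2 + 2 * α n * εseq n + βseq n ^ 2 :=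
      aux_step (hxn n) hpC hgq hαnn hαg
    have h2α : 2 * α n * εseq n ≤ 2 * (βseq n * εseq n / ρseq n) := by
      have h := mul_le_mul_of_nonneg_right hαρ (hεn n)
      rw [div_mul_eq_mul_div] at h
      linarith
    have hbs : (b + 1) * s n = b * s n + s n := by ring
    rw [hbs, hsn]
    rw [hsn] at hzb
    linarith
  -- derive conclusions
  have hSb : ∀ n, ∑ k ∈ Finset.range n, s k ≤ ∑' k, s k := fun n =>
    Summable.sum_le_tsum _ (fun i _ => hs_nonneg i) hssum
  have hS : Tendsto (fun n => ∑ k ∈ Finset.range n, s k) atTop (nhds (∑' k, s k)) :=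
    hssum.hasSum.tendsto_sum_nat
  constructor
  · intro p hpC hfp hApQ hFp
    have hkey := key p hpC hfp hApQ hFp
    set e : ℕ → ℝ := fun n => ‖x n - p‖ ^ 2 - (b + 1) * ∑ k ∈ Finset.range n, s k
      with hedef
    have hanti : Antitone e := by
      apply antitone_nat_of_succ_le
      intro n
      simp only [hedef, Finset.sum_range_succ]
      have hr : (b + 1) * (∑ k ∈ Finset.range n, s k + s n)
          = (b + 1) * ∑ k ∈ Finset.range n, s k + (b + 1) * s n := by ring
      have := hkey n
      linarith
    have hbdd : BddBelow (Set.range e) := by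
      refine ⟨-((b + 1) * ∑' k, s k), ?_⟩
      rintro _ ⟨n, rfl⟩
      have h0 : 0 ≤ ‖x n - p‖ ^ 2 := sq_nonneg _
      have h1 : (b + 1) * ∑ k ∈ Finset.range n, s k ≤ (b + 1) * ∑' k, s k :=
        mul_le_mul_of_nonneg_left (hSb n) (by linarith)
      simp only [hedef]
      linarith
    have he_tend : Tendsto e atTop (nhds (⨅ n, e n)) := tendsto_atTop_ciInf hanti hbdd
    refine ⟨(⨅ n, e n) + (b + 1) * ∑' k, s k, ?_⟩
    have hfun : (fun n => ‖x n - p‖ ^ 2)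
        = fun n => e n + (b + 1) * ∑ k ∈ Finset.range n, s k := by
      funext n; simp only [hedef]; ring
    rw [hfun]
    exact he_tend.add (hS.const_mul (b + 1))
  · obtain ⟨p, hpC, hfp, hApQ, hFp⟩ := hΩne
    have hkey := key p hpC hfp hApQ hFp
    have hind : ∀ n, ‖x n - p‖ ^ 2 ≤ ‖x 0 - p‖ ^ 2 + (b + 1) * ∑ k ∈ Finset.range n, s k := by
      intro n
      induction n with
      | zero => simp
      | succ m ih =>
        have h := hkey m
        rw [Finset.sum_range_succ]
        have hr : (b + 1) * (∑ k ∈ Finset.range m, s k + s m)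
            = (b + 1) * ∑ k ∈ Finset.range m, s k + (b + 1) * s m := by ring
        linarith
    have hdbd : ∀ n, ‖x n - p‖ ^ 2 ≤ ‖x 0 - p‖ ^ 2 + (b + 1) * ∑' k, s k := by
      intro n
      have h1 := hind n
      have h2 : (b + 1) * ∑ k ∈ Finset.range n, s k ≤ (b + 1) * ∑' k, s k :=
        mul_le_mul_of_nonneg_left (hSb n) (by linarith)
      linarith
    refine ⟨Real.sqrt (‖x 0 - p‖ ^ 2 + (b + 1) * ∑' k, s k) + ‖p‖, fun n => ?_⟩
    have h1 : ‖x n‖ ≤ ‖x n - p‖ + ‖p‖ := by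
      calc ‖x n‖ = ‖(x n - p) + p‖ := by rw [sub_add_cancel]
        _ ≤ ‖x n - p‖ + ‖p‖ := norm_add_le _ _
    have h2 : ‖x n - p‖ ≤ Real.sqrt (‖x 0 - p‖ ^ 2 + (b + 1) * ∑' k, s k) := by
      rw [← Real.sqrt_sq (norm_nonneg (x n - p))]
      exact Real.sqrt_le_sqrt (hdbd n)
    linarith
end

section
/- In the split equilibrium setting, assume f is pseudomonotone on C, F is pseudomonotone on Q, and the solution set Ω is nonempty. Let {x_n}, {u_n}, {z_n}, {w_n}, {g_n} be generated by the projection algorithm with parameter sequences satisfying ρ_n ≥ ρ > 0, ε_n ≥ 0, β_n > 0, Σ β_n/ρ_n = ∞, Σ β_n ε_n/ρ_n < ∞, Σ β_n² < ∞, and 0 < a ≤ μ_n with μ_n‖A‖² ≤ 1, and assume the subgradient sequences {g_n} and {w_n} are bounded. Then for each x* ∈ Ω: limsup_{n→∞} f(z_n, x*) = 0 and limsup_{n→∞} F(u_n, Ax*) = 0. -/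
open RealInnerProductSpace Filter
set_option maxHeartbeats 1000000

private lemma projOn_sq_le' {H : Type*} [NormedAddCommGroup H] [InnerProductSpace ℝ H]
    {K : Set H} {v z p : H} (h : IsProjOn K v z) (hp : p ∈ K) :
    ‖z - p‖ ^ 2 ≤ ‖v - p‖ ^ 2 := by
  have h2 := h.2 p hp
  have hexp : ‖v - p‖ ^ 2 = ‖v - z‖ ^ 2 + 2 * ⟪v - z, z - p⟫ + ‖z - p‖ ^ 2 := by
    rw [show v - p = (v - z) + (z - p) by abel, norm_add_sq_real]
  have hin : ⟪v - z, z - p⟫ = - ⟪v - z, p - z⟫ := by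
    rw [show z - p = -(p - z) by abel, inner_neg_right]
  nlinarith [sq_nonneg ‖v - z‖]

private lemma aux_summable' {d p s : ℕ → ℝ} (hd : ∀ n, 0 ≤ d n) (hp : ∀ n, 0 ≤ p n)
    (hs : Summable s) (hrec : ∀ n, d (n + 1) ≤ d n - p n + s n) : Summable p := by
  have habs : Summable fun n => |s n| := summable_abs_iff.mpr hs
  refine summable_of_sum_range_le (c := d 0 + ∑' n, |s n|) hp (fun n => ?_)
  have key : ∀ n, ∑ i ∈ Finset.range n, p i ≤ d 0 - d n + ∑ i ∈ Finset.range n, |s i| := by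
    intro n; induction n with
    | zero => simp
    | succ n ih =>
      rw [Finset.sum_range_succ, Finset.sum_range_succ]
      linarith [hrec n, le_abs_self (s n)]
  have h2 : ∑ i ∈ Finset.range n, |s i| ≤ ∑' n, |s n| :=
    Summable.sum_le_tsum _ (fun i _ => abs_nonneg _) habs
  linarith [key n, hd n]

private lemma aux_not_ev' {q t : ℕ → ℝ} (hq : Summable q) (ht : ∀ n, 0 ≤ t n)
    (htdiv : ¬ Summable t) (h : ∀ᶠ n in atTop, t n ≤ q n) : False := by
  obtain ⟨N, hN⟩ := eventually_atTop.mp h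
  apply htdiv
  rw [← summable_nat_add_iff N]
  exact Summable.of_nonneg_of_le (fun n => ht _) (fun n => hN _ (Nat.le_add_left N n))
    ((summable_nat_add_iff N).mpr hq)

private lemma aux_limsup' {f : ℕ → ℝ} (hle : ∀ n, f n ≤ 0)
    (h : ∀ c : ℝ, 0 < c → ¬ (∀ᶠ n in atTop, f n ≤ -c)) :
    limsup f atTop = 0 := by
  rw [limsup_eq]
  have hmem : (0:ℝ) ∈ {a | ∀ᶠ n in atTop, f n ≤ a} := Eventually.of_forall hle
  have hlb : ∀ b ∈ {a | ∀ᶠ n in atTop, f n ≤ a}, (0:ℝ) ≤ b := by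
    intro b hb
    by_contra hb0
    push_neg at hb0
    exact h (-b) (by linarith) (by simpa using hb)
  exact le_antisymm (csInf_le ⟨0, hlb⟩ hmem) (le_csInf ⟨0, hmem⟩ hlb)

private lemma aux_div' {β ρs ν nrm : ℕ → ℝ} {ρ M : ℝ} (hρ : 0 < ρ) (hρn : ∀ n, ρ ≤ ρs n)
    (hβ : ∀ n, 0 < β n) (hn0 : ∀ n, 0 ≤ nrm n) (hM : ∀ n, nrm n ≤ M)
    (hν : ∀ n, ν n = β n / max (ρs n) (nrm n))
    (hdiv : ¬ Summable fun n => β n / ρs n) : ¬ Summable ν := by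
  intro hS
  apply hdiv
  set K : ℝ := max 1 (M / ρ) with hK
  have hM0 : 0 ≤ M := le_trans (hn0 0) (hM 0)
  have hK1 : (1:ℝ) ≤ K := le_max_left _ _
  have hbound : ∀ n, β n / ρs n ≤ K * ν n := by
    intro n
    have hρpos : 0 < ρs n := lt_of_lt_of_le hρ (hρn n)
    have hmaxpos : 0 < max (ρs n) (nrm n) := lt_of_lt_of_le hρpos (le_max_left _ _)
    have hmax : max (ρs n) (nrm n) ≤ K * ρs n := by
      rcases max_cases (ρs n) (nrm n) with ⟨he, _⟩ | ⟨he, _⟩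
      · rw [he]; nlinarith
      · rw [he]
        have h1 : M / ρ ≤ K := le_max_right _ _
        have h2 : M / ρ * ρ = M := div_mul_cancel₀ _ (ne_of_gt hρ)
        nlinarith [div_nonneg hM0 hρ.le, hM n, hρn n]
    rw [hν n, mul_div_assoc']
    rw [div_le_div_iff₀ hρpos hmaxpos]
    nlinarith [hβ n]
  exact Summable.of_nonneg_of_le
    (fun n => div_nonneg (hβ n).le (lt_of_lt_of_le hρ (hρn n)).le)
    hbound (hS.mul_left K)

/-- Lemma 3.6(iii): `limsup f(z_n, x*) = 0` and
`limsup F(u_n, Ax*) = 0` for each solution `x*`. -/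
theorem stmt7 {H₁ H₂ : Type*}
    [NormedAddCommGroup H₁] [InnerProductSpace ℝ H₁] [CompleteSpace H₁]
    [NormedAddCommGroup H₂] [InnerProductSpace ℝ H₂] [CompleteSpace H₂]
    (C : Set H₁) (hCne : C.Nonempty) (hCcl : IsClosed C) (hCcv : Convex ℝ C)
    (Q : Set H₂) (hQne : Q.Nonempty) (hQcl : IsClosed Q) (hQcv : Convex ℝ Q)
    (A : H₁ →L[ℝ] H₂)
    (f : H₁ → H₁ → ℝ) (hf0 : ∀ x ∈ C, f x x = 0)
    (F : H₂ → H₂ → ℝ) (hF0 : ∀ u ∈ Q, F u u = 0)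
    (hfpm : ∀ x ∈ C, ∀ y ∈ C, 0 ≤ f x y → f y x ≤ 0)
    (hFpm : ∀ u ∈ Q, ∀ v ∈ Q, 0 ≤ F u v → F v u ≤ 0)
    (ρseq εseq βseq μseq : ℕ → ℝ) (ρ a : ℝ)
    (hρ : 0 < ρ) (hρn : ∀ n, ρ ≤ ρseq n)
    (hεn : ∀ n, 0 ≤ εseq n) (hβn : ∀ n, 0 < βseq n)
    (hsum1 : Summable (fun n => βseq n * εseq n / ρseq n))
    (hsum2 : Summable (fun n => (βseq n) ^ 2))
    (ha : 0 < a) (hμn : ∀ n, a ≤ μseq n) (hμA : ∀ n, μseq n * ‖A‖ ^ 2 ≤ 1)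
    (x : ℕ → H₁) (u y w : ℕ → H₂) (z g : ℕ → H₁) (γ α : ℕ → ℝ)
    (hx0 : x 0 ∈ C)
    (hu : ∀ n, IsProjOn Q (A (x n)) (u n))
    (hw : ∀ n, IsDiagSubgrad Q F (εseq n) (u n) (w n))
    (hγ : ∀ n, γ n = βseq n / max (ρseq n) ‖w n‖)
    (hy : ∀ n, IsProjOn Q (u n - γ n • w n) (y n))
    (hz : ∀ n, IsProjOn C
      (x n + μseq n • (ContinuousLinearMap.adjoint A) (y n - A (x n))) (z n))
    (hg : ∀ n, IsDiagSubgrad C f (εseq n) (z n) (g n))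
    (hα : ∀ n, α n = βseq n / max (ρseq n) ‖g n‖)
    (hxn : ∀ n, IsProjOn C (z n - α n • g n) (x (n + 1)))
    (hdiv : ¬ Summable (fun n => βseq n / ρseq n))
    (hgbd : ∃ M : ℝ, ∀ n, ‖g n‖ ≤ M) (hwbd : ∃ M : ℝ, ∀ n, ‖w n‖ ≤ M)
    (hΩne : ∃ xs, xs ∈ C ∧ (∀ y' ∈ C, 0 ≤ f xs y') ∧ A xs ∈ Q ∧ ∀ v ∈ Q, 0 ≤ F (A xs) v) :
    ∀ xs, xs ∈ C → (∀ y' ∈ C, 0 ≤ f xs y') → A xs ∈ Q → (∀ v ∈ Q, 0 ≤ F (A xs) v) →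
      Filter.limsup (fun n => f (z n) xs) atTop = 0 ∧
      Filter.limsup (fun n => F (u n) (A xs)) atTop = 0 := by
  intro xs hxsC hfxs hAxs hFxs
  obtain ⟨M, hM⟩ := hgbd
  obtain ⟨M', hM'⟩ := hwbd
  -- basic positivity facts
  have hρpos : ∀ n, 0 < ρseq n := fun n => lt_of_lt_of_le hρ (hρn n)
  have hmaxg : ∀ n, 0 < max (ρseq n) ‖g n‖ := fun n => lt_of_lt_of_le (hρpos n) (le_max_left _ _)
  have hmaxw : ∀ n, 0 < max (ρseq n) ‖w n‖ := fun n => lt_of_lt_of_le (hρpos n) (le_max_left _ _)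
  have hαpos : ∀ n, 0 < α n := fun n => by rw [hα n]; exact div_pos (hβn n) (hmaxg n)
  have hγpos : ∀ n, 0 < γ n := fun n => by rw [hγ n]; exact div_pos (hβn n) (hmaxw n)
  have hαle : ∀ n, α n ≤ βseq n / ρseq n := fun n => by
    rw [hα n]; exact div_le_div_of_nonneg_left (hβn n).le (hρpos n) (le_max_left _ _)
  have hγle : ∀ n, γ n ≤ βseq n / ρseq n := fun n => by
    rw [hγ n]; exact div_le_div_of_nonneg_left (hβn n).le (hρpos n) (le_max_left _ _)
  have hαg : ∀ n, α n * ‖g n‖ ≤ βseq n := by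
    intro n
    rw [hα n, div_mul_eq_mul_div, div_le_iff₀ (hmaxg n)]
    exact mul_le_mul_of_nonneg_left (le_max_right _ _) (hβn n).le
  have hγw : ∀ n, γ n * ‖w n‖ ≤ βseq n := by
    intro n
    rw [hγ n, div_mul_eq_mul_div, div_le_iff₀ (hmaxw n)]
    exact mul_le_mul_of_nonneg_left (le_max_right _ _) (hβn n).le
  have hμpos : ∀ n, 0 < μseq n := fun n => lt_of_lt_of_le ha (hμn n)
  -- nonpositivity of the values at the solution
  have hfle : ∀ n, f (z n) xs ≤ 0 := fun n =>
    hfpm xs hxsC (z n) (hz n).1 (hfxs (z n) (hz n).1)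
  have hFle : ∀ n, F (u n) (A xs) ≤ 0 := fun n =>
    hFpm (A xs) hAxs (u n) (hu n).1 (hFxs (u n) (hu n).1)
  set Binv : ℝ := (‖A‖ ^ 2)⁻¹ with hBinv
  have hBinv0 : 0 ≤ Binv := inv_nonneg.mpr (sq_nonneg _)
  -- Inequality (I')
  have hI : ∀ n, ‖z n - xs‖ ^ 2 ≤ ‖x n - xs‖ ^ 2 + 2 * (μseq n * γ n) * F (u n) (A xs)
      + Binv * (2 * γ n * εseq n + γ n ^ 2 * ‖w n‖ ^ 2) := by
    intro n
    have hbr : 0 ≤ 2 * γ n * εseq n + γ n ^ 2 * ‖w n‖ ^ 2 := by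
      have := hγpos n; have := hεn n; positivity
    rcases eq_or_lt_of_le (norm_nonneg A) with hA0 | hApos
    · -- degenerate case A = 0
      have hA : A = 0 := norm_eq_zero.mp hA0.symm
      have hAx : ∀ v : H₁, A v = 0 := by intro v; rw [hA]; rfl
      have h0Q : (0 : H₂) ∈ Q := by rw [← hAx xs]; exact hAxs
      have hu0 : u n = 0 := by
        have h2 := (hu n).2 0 h0Q
        rw [hAx (x n), zero_sub, inner_neg_neg, real_inner_self_eq_norm_sq] at h2
        have hn : ‖u n‖ = 0 := by nlinarith [norm_nonneg (u n)]
        exact norm_eq_zero.mp hn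
      have hF00 : F (u n) (A xs) = 0 := by rw [hu0, hAx xs]; exact hF0 0 h0Q
      have hadj : (ContinuousLinearMap.adjoint A : H₂ →L[ℝ] H₁) = 0 := by
        rw [hA]; exact map_zero _
      have hzineq := projOn_sq_le' (hz n) hxsC
      rw [hadj] at hzineq
      simp only [ContinuousLinearMap.zero_apply, smul_zero, add_zero] at hzineq
      rw [hF00]
      nlinarith [mul_nonneg hBinv0 hbr]
    · -- case 0 < ‖A‖
      have hA2 : (0:ℝ) < ‖A‖ ^ 2 := by positivity
      have hμB : μseq n ≤ Binv := by
        rw [hBinv, ← one_div, le_div_iff₀ hA2]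
        exact hμA n
      have h1 : ‖u n - A xs‖ ^ 2 ≤ ‖A (x n) - A xs‖ ^ 2 := projOn_sq_le' (hu n) hAxs
      have h2 : ‖y n - A xs‖ ^ 2 ≤ ‖u n - γ n • w n - A xs‖ ^ 2 := projOn_sq_le' (hy n) hAxs
      have hexp2 : ‖u n - γ n • w n - A xs‖ ^ 2
          = ‖u n - A xs‖ ^ 2 - 2 * (γ n * ⟪w n, u n - A xs⟫) + γ n ^ 2 * ‖w n‖ ^ 2 := by
        rw [show u n - γ n • w n - A xs = (u n - A xs) - γ n • w n by abel,
          norm_sub_sq_real, real_inner_smul_right, real_inner_comm, norm_smul,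
          Real.norm_eq_abs, mul_pow, sq_abs]
      have hsubw : ⟪w n, A xs - u n⟫ ≤ F (u n) (A xs) + εseq n := hw n (A xs) hAxs
      have hinnw : ⟪w n, A xs - u n⟫ = - ⟪w n, u n - A xs⟫ := by
        rw [show A xs - u n = -(u n - A xs) by abel, inner_neg_right]
      have hmw : 2 * γ n * (- ⟪w n, u n - A xs⟫)
          ≤ 2 * γ n * (F (u n) (A xs) + εseq n) := by
        apply mul_le_mul_of_nonneg_left _ (by linarith [hγpos n])
        rw [← hinnw]; exact hsubw
      have hy2 : ‖y n - A xs‖ ^ 2 ≤ ‖A (x n) - A xs‖ ^ 2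
          + 2 * γ n * (F (u n) (A xs) + εseq n) + γ n ^ 2 * ‖w n‖ ^ 2 := by
        rw [hexp2] at h2
        nlinarith [hmw, h1]
      have hz1 := projOn_sq_le' (hz n) hxsC
      set e : H₂ := y n - A (x n) with he
      have hexp3 : ‖x n + μseq n • (ContinuousLinearMap.adjoint A) e - xs‖ ^ 2
          = ‖x n - xs‖ ^ 2 + 2 * (μseq n * ⟪e, A (x n) - A xs⟫)
            + μseq n ^ 2 * ‖(ContinuousLinearMap.adjoint A) e‖ ^ 2 := by
        rw [show x n + μseq n • (ContinuousLinearMap.adjoint A) e - xs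
            = (x n - xs) + μseq n • (ContinuousLinearMap.adjoint A) e by abel,
          norm_add_sq_real, real_inner_smul_right, real_inner_comm,
          ContinuousLinearMap.adjoint_inner_left, map_sub, norm_smul,
          Real.norm_eq_abs, mul_pow, sq_abs]
      have hpol : 2 * ⟪e, A (x n) - A xs⟫
          = ‖y n - A xs‖ ^ 2 - ‖A (x n) - A xs‖ ^ 2 - ‖e‖ ^ 2 := by
        have hpp : ‖y n - A xs‖ ^ 2 = ‖y n - A (x n)‖ ^ 2
            + 2 * ⟪y n - A (x n), A (x n) - A xs⟫ + ‖A (x n) - A xs‖ ^ 2 := by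
          rw [show y n - A xs = (y n - A (x n)) + (A (x n) - A xs) by abel, norm_add_sq_real]
        rw [he]
        linarith
      have hAe : ‖(ContinuousLinearMap.adjoint A) e‖ ≤ ‖A‖ * ‖e‖ := by
        have h := (ContinuousLinearMap.adjoint A).le_opNorm e
        rwa [LinearIsometryEquiv.norm_map ContinuousLinearMap.adjoint A] at h
      have hAe2 : μseq n ^ 2 * ‖(ContinuousLinearMap.adjoint A) e‖ ^ 2
          ≤ μseq n * ‖e‖ ^ 2 := by
        have hq1 : μseq n ^ 2 * ‖(ContinuousLinearMap.adjoint A) e‖ ^ 2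
            ≤ μseq n ^ 2 * (‖A‖ * ‖e‖) ^ 2 :=
          mul_le_mul_of_nonneg_left
            (pow_le_pow_left₀ (norm_nonneg _) hAe 2) (sq_nonneg (μseq n))
        nlinarith [mul_le_mul_of_nonneg_left (hμA n)
          (mul_nonneg (hμpos n).le (sq_nonneg ‖e‖))]
      rw [hexp3] at hz1
      have hm2 : μseq n * (2 * ⟪e, A (x n) - A xs⟫)
          ≤ μseq n * (2 * γ n * (F (u n) (A xs) + εseq n)
            + γ n ^ 2 * ‖w n‖ ^ 2 - ‖e‖ ^ 2) := by
        apply mul_le_mul_of_nonneg_left _ (hμpos n).le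
        rw [hpol]
        have : ‖e‖ ^ 2 = ‖y n - A (x n)‖ ^ 2 := by rw [he]
        linarith [hy2]
      have hb1 : μseq n * (2 * γ n * εseq n) ≤ Binv * (2 * γ n * εseq n) := by
        apply mul_le_mul_of_nonneg_right hμB
        have := hγpos n; have := hεn n; positivity
      have hb2 : μseq n * (γ n ^ 2 * ‖w n‖ ^ 2) ≤ Binv * (γ n ^ 2 * ‖w n‖ ^ 2) := by
        apply mul_le_mul_of_nonneg_right hμB; positivity
      nlinarith [hz1, hm2, hAe2, hb1, hb2]
  -- Inequality (II)
  have hII : ∀ n, ‖x (n + 1) - xs‖ ^ 2 ≤ ‖z n - xs‖ ^ 2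
      + 2 * α n * (f (z n) xs + εseq n) + α n ^ 2 * ‖g n‖ ^ 2 := by
    intro n
    have h1 := projOn_sq_le' (hxn n) hxsC
    have hexp : ‖z n - α n • g n - xs‖ ^ 2
        = ‖z n - xs‖ ^ 2 - 2 * (α n * ⟪g n, z n - xs⟫) + α n ^ 2 * ‖g n‖ ^ 2 := by
      rw [show z n - α n • g n - xs = (z n - xs) - α n • g n by abel,
        norm_sub_sq_real, real_inner_smul_right, real_inner_comm, norm_smul,
        Real.norm_eq_abs, mul_pow, sq_abs]
    have hsub : ⟪g n, xs - z n⟫ ≤ f (z n) xs + εseq n := hg n xs hxsC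
    have hinn : ⟪g n, xs - z n⟫ = - ⟪g n, z n - xs⟫ := by
      rw [show xs - z n = -(z n - xs) by abel, inner_neg_right]
    have hm : 2 * α n * (- ⟪g n, z n - xs⟫) ≤ 2 * α n * (f (z n) xs + εseq n) := by
      apply mul_le_mul_of_nonneg_left _ (by linarith [hαpos n])
      rw [← hinn]; exact hsub
    rw [hexp] at h1
    nlinarith [hm]
  -- the summable telescoping
  have hq1nn : ∀ n, 0 ≤ 2 * α n * (- f (z n) xs) := fun n =>
    mul_nonneg (by linarith [hαpos n]) (by linarith [hfle n])
  have hq2nn : ∀ n, 0 ≤ 2 * (μseq n * γ n) * (- F (u n) (A xs)) := fun n =>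
    mul_nonneg (by nlinarith [hμpos n, hγpos n]) (by linarith [hFle n])
  have hssum : Summable (fun n => 2 * α n * εseq n + α n ^ 2 * ‖g n‖ ^ 2
      + Binv * (2 * γ n * εseq n + γ n ^ 2 * ‖w n‖ ^ 2)) := by
    have hS0 : Summable (fun n => 2 * (βseq n * εseq n / ρseq n) + βseq n ^ 2) :=
      (hsum1.mul_left 2).add hsum2
    have hS : Summable (fun n => (2 * (βseq n * εseq n / ρseq n) + βseq n ^ 2)
        + Binv * (2 * (βseq n * εseq n / ρseq n) + βseq n ^ 2)) :=
      hS0.add (hS0.mul_left Binv)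
    apply Summable.of_nonneg_of_le _ _ hS
    · intro n
      have := hαpos n; have := hγpos n; have := hεn n
      positivity
    · intro n
      have hβρ : (βseq n / ρseq n) * εseq n = βseq n * εseq n / ρseq n := by ring
      have e1 : α n * εseq n ≤ βseq n * εseq n / ρseq n := by
        rw [← hβρ]; exact mul_le_mul_of_nonneg_right (hαle n) (hεn n)
      have e2 : γ n * εseq n ≤ βseq n * εseq n / ρseq n := by
        rw [← hβρ]; exact mul_le_mul_of_nonneg_right (hγle n) (hεn n)
      have e3 : α n ^ 2 * ‖g n‖ ^ 2 ≤ βseq n ^ 2 := by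
        nlinarith [hαg n, mul_nonneg (hαpos n).le (norm_nonneg (g n))]
      have e4 : γ n ^ 2 * ‖w n‖ ^ 2 ≤ βseq n ^ 2 := by
        nlinarith [hγw n, mul_nonneg (hγpos n).le (norm_nonneg (w n))]
      have e5 : Binv * (2 * γ n * εseq n + γ n ^ 2 * ‖w n‖ ^ 2)
          ≤ Binv * (2 * (βseq n * εseq n / ρseq n) + βseq n ^ 2) := by
        apply mul_le_mul_of_nonneg_left _ hBinv0
        nlinarith [e2, e4]
      nlinarith [e1, e3, e5]
  have hpsum : Summable (fun n => 2 * α n * (- f (z n) xs)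
      + 2 * (μseq n * γ n) * (- F (u n) (A xs))) := by
    apply aux_summable' (d := fun n => ‖x n - xs‖ ^ 2) (fun n => sq_nonneg _)
      (fun n => add_nonneg (hq1nn n) (hq2nn n)) hssum
    intro n
    have h1 := hI n
    have h2 := hII n
    nlinarith [h1, h2]
  have hq1 : Summable (fun n => 2 * α n * (- f (z n) xs)) :=
    Summable.of_nonneg_of_le hq1nn (fun n => by linarith [hq2nn n]) hpsum
  have hq2 : Summable (fun n => 2 * (μseq n * γ n) * (- F (u n) (A xs))) :=
    Summable.of_nonneg_of_le hq2nn (fun n => by linarith [hq1nn n]) hpsum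
  -- divergence of the step sizes
  have hαdiv : ¬ Summable α :=
    aux_div' hρ hρn hβn (fun n => norm_nonneg (g n)) hM hα hdiv
  have hγdiv : ¬ Summable γ :=
    aux_div' hρ hρn hβn (fun n => norm_nonneg (w n)) hM' hγ hdiv
  constructor
  · apply aux_limsup' hfle
    intro c hc hev
    refine aux_not_ev' hq1 (t := fun n => 2 * c * α n)
      (fun n => by show (0:ℝ) ≤ 2 * c * α n; nlinarith [hαpos n]) ?_
      (hev.mono fun n hn => ?_)
    · intro hS
      exact hαdiv ((summable_mul_left_iff (by positivity : (2 * c : ℝ) ≠ 0)).mp hS)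
    · show 2 * c * α n ≤ 2 * α n * (- f (z n) xs)
      have h1 : α n * c ≤ α n * (- f (z n) xs) :=
        mul_le_mul_of_nonneg_left (by linarith) (hαpos n).le
      nlinarith [h1]
  · apply aux_limsup' hFle
    intro c hc hev
    refine aux_not_ev' hq2 (t := fun n => 2 * (a * c) * γ n)
      (fun n => by show (0:ℝ) ≤ 2 * (a * c) * γ n; exact mul_nonneg (by nlinarith) (hγpos n).le) ?_
      (hev.mono fun n hn => ?_)
    · intro hS
      exact hγdiv ((summable_mul_left_iff
        (by positivity : (2 * (a * c) : ℝ) ≠ 0)).mp hS)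
    · have h1 : c * γ n ≤ (- F (u n) (A xs)) * γ n :=
        mul_le_mul_of_nonneg_right (by linarith) (hγpos n).le
      show 2 * (a * c) * γ n ≤ 2 * (μseq n * γ n) * (- F (u n) (A xs))
      have h2 : a * (c * γ n) ≤ μseq n * ((- F (u n) (A xs)) * γ n) :=
        mul_le_mul (hμn n) h1 (by nlinarith [hγpos n]) (le_trans ha.le (hμn n))
      nlinarith [h2]
end

section
/- Let H be a real Hilbert space, Ω ⊆ H a nonempty closed convex subset, {x_n}_{n≥1} a sequence in H, and {c_n}_{n≥1} a sequence of nonnegative reals with Σ_{n≥1} c_n < ∞. Suppose ‖x_{n+1} − x*‖² ≤ ‖x_n − x*‖² + c_n for every n ≥ 1 and every x* ∈ Ω. Then the sequence {‖x_n − P_Ω(x_n)‖²} converges, and the sequence {P_Ω(x_n)} is a Cauchy sequence, hence converges strongly to some point of Ω. -/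
open RealInnerProductSpace Filter

/-- quasi-Fejér monotone sequences: `‖x_n − P_Ω(x_n)‖²` converges
and `{P_Ω(x_n)}` is Cauchy, hence converges strongly to a point of `Ω`. -/
theorem stmt9 {H : Type*} [NormedAddCommGroup H] [InnerProductSpace ℝ H] [CompleteSpace H]
    (Ω : Set H) (hne : Ω.Nonempty) (hcl : IsClosed Ω) (hcv : Convex ℝ Ω)
    (x : ℕ → H) (c : ℕ → ℝ) (hc0 : ∀ n, 0 ≤ c n) (hsum : Summable c)
    (hrec : ∀ n, 1 ≤ n → ∀ xs ∈ Ω, ‖x (n + 1) - xs‖ ^ 2 ≤ ‖x n - xs‖ ^ 2 + c n)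
    (P : H → H) (hP : ∀ v, IsProjOn Ω v (P v)) :
    (∃ l : ℝ, Tendsto (fun n => ‖x n - P (x n)‖ ^ 2) atTop (nhds l)) ∧
    CauchySeq (fun n => P (x n)) ∧
    ∃ b ∈ Ω, Tendsto (fun n => P (x n)) atTop (nhds b) := by
  classical
  set d : ℕ → ℝ := fun n => ‖x n - P (x n)‖ ^ 2 with hd
  have hPmem : ∀ v, P v ∈ Ω := fun v => (hP v).1
  have hPproj : ∀ v, ∀ y ∈ Ω, (⟪v - P v, y - P v⟫) ≤ 0 := fun v => (hP v).2
  have hd0 : ∀ n, 0 ≤ d n := fun n => sq_nonneg _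
  -- nearest point property
  have hnear : ∀ v, ∀ y ∈ Ω, ‖v - P v‖ ^ 2 ≤ ‖v - y‖ ^ 2 := by
    intro v y hy
    have h := hPproj v y hy
    have key : ‖v - y‖ ^ 2 =
        ‖v - P v‖ ^ 2 - 2 * ⟪v - P v, y - P v⟫ + ‖y - P v‖ ^ 2 := by
      have hvy : v - y = (v - P v) - (y - P v) := by abel
      rw [hvy, norm_sub_sq_real]
    nlinarith [sq_nonneg ‖y - P v‖]
  -- iterated recursion
  have hiter : ∀ xs ∈ Ω, ∀ n, 1 ≤ n → ∀ m, n ≤ m →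
      ‖x m - xs‖ ^ 2 ≤ ‖x n - xs‖ ^ 2 + ∑ k ∈ Finset.Ico n m, c k := by
    intro xs hxs n hn m hm
    induction m, hm using Nat.le_induction with
    | base => simp
    | succ m hm ih =>
      have h1 := hrec m (le_trans hn hm) xs hxs
      have h2 : ∑ k ∈ Finset.Ico n (m + 1), c k
          = (∑ k ∈ Finset.Ico n m, c k) + c m := by
        rw [Finset.sum_Ico_succ_top hm]
      linarith
  -- tails of c
  set t : ℕ → ℝ := fun n => ∑' k, c (k + n) with ht
  have hsh : ∀ n, Summable fun k => c (k + n) := fun n =>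
    (summable_nat_add_iff n).mpr hsum
  have ht0 : ∀ n, 0 ≤ t n := fun n => tsum_nonneg fun k => hc0 _
  have htrec : ∀ n, t n = c n + t (n + 1) := by
    intro n
    calc t n = c (0 + n) + ∑' k, c (k + 1 + n) := Summable.tsum_eq_zero_add (hsh n)
      _ = c n + t (n + 1) := by
          rw [zero_add]
          congr 1
          exact tsum_congr fun k => by congr 1; omega
  have httend : Tendsto t atTop (nhds 0) := tendsto_sum_nat_add c
  -- partial sums bounded by tails
  have hpart : ∀ n m, n ≤ m → ∑ k ∈ Finset.Ico n m, c k ≤ t n := by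
    intro n m hm
    rw [Finset.sum_Ico_eq_sum_range]
    calc ∑ k ∈ Finset.range (m - n), c (n + k)
        = ∑ k ∈ Finset.range (m - n), c (k + n) := by
          refine Finset.sum_congr rfl fun k _ => ?_; rw [add_comm]
      _ ≤ t n := Summable.sum_le_tsum _ (fun i _ => hc0 _) (hsh n)
  -- d (n+1) ≤ d n + c n for n ≥ 1
  have hdrec : ∀ n, 1 ≤ n → d (n + 1) ≤ d n + c n := by
    intro n hn
    have h1 : d (n + 1) ≤ ‖x (n + 1) - P (x n)‖ ^ 2 :=
      hnear (x (n + 1)) (P (x n)) (hPmem (x n))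
    have h2 := hrec n hn (P (x n)) (hPmem (x n))
    have : ‖x n - P (x n)‖ ^ 2 = d n := rfl
    linarith
  -- the combined sequence e n = d (n+1) + t (n+1) is antitone and bounded below
  set e : ℕ → ℝ := fun n => d (n + 1) + t (n + 1) with he
  have hant : Antitone e := by
    apply antitone_nat_of_succ_le
    intro n
    have h1 : d (n + 2) ≤ d (n + 1) + c (n + 1) := hdrec (n + 1) (by omega)
    have h2 := htrec (n + 1)
    simp only [he]
    have : n + 1 + 1 = n + 2 := rfl
    linarith
  have hbdd : BddBelow (Set.range e) := by
    refine ⟨0, ?_⟩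
    rintro _ ⟨n, rfl⟩
    exact add_nonneg (hd0 _) (ht0 _)
  have hetend : Tendsto e atTop (nhds (⨅ n, e n)) := tendsto_atTop_ciInf hant hbdd
  set L : ℝ := ⨅ n, e n with hL
  have httend' : Tendsto (fun n => t (n + 1)) atTop (nhds 0) :=
    httend.comp (tendsto_add_atTop_nat 1)
  have hdtend' : Tendsto (fun n => d (n + 1)) atTop (nhds L) := by
    have : Tendsto (fun n => e n - t (n + 1)) atTop (nhds (L - 0)) :=
      hetend.sub httend'
    simpa [he, add_sub_cancel_right] using this
  have hdtend : Tendsto d atTop (nhds L) := (tendsto_add_atTop_iff_nat 1).mp hdtend'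
  -- key bound for Cauchyness
  have hkey : ∀ n m, 1 ≤ n → n ≤ m →
      ‖P (x m) - P (x n)‖ ^ 2 ≤ d n + t n - d m := by
    intro n m hn hm
    have hproj := hPproj (x m) (P (x n)) (hPmem (x n))
    have hexp : ‖x m - P (x n)‖ ^ 2 =
        ‖x m - P (x m)‖ ^ 2 - 2 * ⟪x m - P (x m), P (x n) - P (x m)⟫
          + ‖P (x n) - P (x m)‖ ^ 2 := by
      have h : x m - P (x n) = (x m - P (x m)) - (P (x n) - P (x m)) := by abel
      rw [h, norm_sub_sq_real]
    have h1 : ‖x m - P (x n)‖ ^ 2 ≤ ‖x n - P (x n)‖ ^ 2 + ∑ k ∈ Finset.Ico n m, c k :=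
      hiter (P (x n)) (hPmem (x n)) n hn m hm
    have h2 := hpart n m hm
    have h3 : ‖P (x m) - P (x n)‖ ^ 2 = ‖P (x n) - P (x m)‖ ^ 2 := by
      rw [norm_sub_rev]
    have hdm : ‖x m - P (x m)‖ ^ 2 = d m := rfl
    have hdn : ‖x n - P (x n)‖ ^ 2 = d n := rfl
    linarith
  -- Cauchy
  have hcauchy : CauchySeq (fun n => P (x n)) := by
    rw [Metric.cauchySeq_iff']
    intro ε hε
    have hε2 : 0 < ε ^ 2 / 4 := by positivity
    obtain ⟨N1, hN1⟩ := (Metric.tendsto_atTop.mp hdtend) (ε ^ 2 / 4) hε2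
    obtain ⟨N2, hN2⟩ := (Metric.tendsto_atTop.mp httend) (ε ^ 2 / 4) hε2
    refine ⟨max (max N1 N2) 1, fun n hn => ?_⟩
    set N := max (max N1 N2) 1 with hN
    have hN1' : N1 ≤ N := le_trans (le_max_left _ _) (le_max_left _ _)
    have hN2' : N2 ≤ N := le_trans (le_max_right _ _) (le_max_left _ _)
    have h1N : 1 ≤ N := le_max_right _ _
    have hb := hkey N n h1N hn
    have hdN : |d N - L| < ε ^ 2 / 4 := by
      have := hN1 N hN1'; rwa [Real.dist_eq] at this
    have hdn' : |d n - L| < ε ^ 2 / 4 := by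
      have := hN1 n (le_trans hN1' hn); rwa [Real.dist_eq] at this
    have htN : t N < ε ^ 2 / 4 := by
      have := hN2 N hN2'
      rw [Real.dist_eq, sub_zero] at this
      exact lt_of_le_of_lt (le_abs_self _) this
    have hlt : ‖P (x n) - P (x N)‖ ^ 2 < ε ^ 2 := by
      have h1 : d N - L < ε ^ 2 / 4 := lt_of_le_of_lt (le_abs_self _) hdN
      have h2 : L - d n < ε ^ 2 / 4 := by
        have := neg_abs_le (d n - L); linarith [lt_of_le_of_lt (le_abs_self _) hdn']
      have := abs_lt.mp hdn'
      linarith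
    rw [dist_eq_norm]
    have hnn : (0 : ℝ) ≤ ε := le_of_lt hε
    exact lt_of_pow_lt_pow_left₀ 2 hnn hlt
  obtain ⟨b, hb⟩ := cauchySeq_tendsto_of_complete hcauchy
  refine ⟨⟨L, hdtend⟩, hcauchy, b, ?_, hb⟩
  exact hcl.mem_of_tendsto hb (Eventually.of_forall fun n => hPmem _)
end

section
/- Let H be a real Hilbert space, C ⊆ H a nonempty closed convex subset, and f : H×H → ℝ a bifunction with f(x,x) = 0 for all x ∈ C. Assume f is pseudomonotone on C, f(x,·) is convex and lower semicontinuous on C for each x ∈ C, and f(·,y) is sequentially weakly upper semicontinuous on C for each y ∈ C. Then the solution set EP(f,C) = {x* ∈ C : f(x*,y) ≥ 0 for all y ∈ C} is closed and convex. -/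
open RealInnerProductSpace Filter

private lemma limsup_nonneg_aux (u : ℕ → ℝ) (h : ∀ n, 0 ≤ u n) :
    0 ≤ Filter.limsup u atTop := by
  rw [Filter.limsup_eq]
  apply Real.sInf_nonneg
  intro a ha
  obtain ⟨n, hn⟩ := ha.exists
  exact (h n).trans hn

/-- under pseudomonotonicity, convexity and lower semicontinuity in
the second argument, and sequential weak upper semicontinuity in the first
argument, the solution set `EP(f,C)` is closed and convex. -/
theorem stmt10 {H : Type*} [NormedAddCommGroup H] [InnerProductSpace ℝ H] [CompleteSpace H]
    (C : Set H) (hCne : C.Nonempty) (hCcl : IsClosed C) (hCcv : Convex ℝ C)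
    (f : H → H → ℝ) (hf0 : ∀ x ∈ C, f x x = 0)
    (hfpm : ∀ x ∈ C, ∀ y ∈ C, 0 ≤ f x y → f y x ≤ 0)
    (hfcv : ∀ x ∈ C, ConvexOn ℝ C (f x))
    (hflsc : ∀ x ∈ C, LowerSemicontinuousOn (f x) C)
    (hfwusc : ∀ y ∈ C, ∀ (zs : ℕ → H), (∀ m, zs m ∈ C) → ∀ xl ∈ C,
      (∀ h : H, Tendsto (fun m => (⟪zs m, h⟫)) atTop (nhds (⟪xl, h⟫))) →
      Filter.limsup (fun m => f (zs m) y) atTop ≤ f xl y) :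
    IsClosed {xs | xs ∈ C ∧ ∀ y ∈ C, 0 ≤ f xs y} ∧
    Convex ℝ {xs | xs ∈ C ∧ ∀ y ∈ C, 0 ≤ f xs y} := by
  -- Minty-type characterization
  have key : {xs | xs ∈ C ∧ ∀ y ∈ C, 0 ≤ f xs y} =
      {xs | xs ∈ C ∧ ∀ y ∈ C, f y xs ≤ 0} := by
    ext x
    constructor
    · rintro ⟨hx, hx2⟩
      exact ⟨hx, fun y hy => hfpm x hx y hy (hx2 y hy)⟩
    · rintro ⟨hx, hx2⟩
      refine ⟨hx, fun y hy => ?_⟩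
      set zs : ℕ → H := fun m => x + ((1 : ℝ) / (m + 1)) • (y - x) with hzs
      have ht0 : ∀ m : ℕ, (0 : ℝ) < 1 / (m + 1) := by
        intro m; positivity
      have ht1 : ∀ m : ℕ, (1 : ℝ) / (m + 1) ≤ 1 := by
        intro m
        rw [div_le_one (by positivity)]
        linarith [Nat.cast_nonneg (α := ℝ) m]
      have hzsC : ∀ m, zs m ∈ C := by
        intro m
        have := hCcv hx hy (by linarith [ht1 m]) (le_of_lt (ht0 m))
          (by ring : (1 - 1 / ((m : ℝ) + 1)) + 1 / ((m : ℝ) + 1) = 1)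
        have heq : (1 - 1 / ((m : ℝ) + 1)) • x + (1 / ((m : ℝ) + 1)) • y = zs m := by
          simp [hzs, smul_sub, sub_smul]
          module
        rwa [heq] at this
      have hnn : ∀ m, 0 ≤ f (zs m) y := by
        intro m
        set t : ℝ := 1 / (m + 1)
        have hzm := hzsC m
        have hcv := (hfcv (zs m) hzm).2 hy hx (le_of_lt (ht0 m))
          (by linarith [ht1 m]) (by ring : t + (1 - t) = 1)
        have heq : t • y + (1 - t) • x = zs m := by
          simp [hzs, smul_sub, sub_smul]
          module
        rw [heq, hf0 (zs m) hzm] at hcv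
        have hfx : f (zs m) x ≤ 0 := hx2 (zs m) hzm
        simp only [smul_eq_mul] at hcv
        nlinarith [ht0 m, ht1 m, mul_nonneg (sub_nonneg.mpr (ht1 m)) (neg_nonneg.mpr hfx)]
      have hweak : ∀ h : H, Tendsto (fun m => (⟪zs m, h⟫)) atTop (nhds (⟪x, h⟫)) := by
        intro h
        have h1 : Tendsto (fun m : ℕ => (1 : ℝ) / (m + 1)) atTop (nhds 0) :=
          tendsto_one_div_add_atTop_nhds_zero_nat
        have h2 : Tendsto (fun m : ℕ => ⟪x, h⟫ + (1 / ((m : ℝ) + 1)) * ⟪y - x, h⟫)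
            atTop (nhds (⟪x, h⟫ + 0 * ⟪y - x, h⟫)) :=
          tendsto_const_nhds.add (h1.mul_const _)
        simp only [zero_mul, add_zero] at h2
        convert h2 using 2 with m
        simp [hzs, inner_add_left, real_inner_smul_left]
      have hls := hfwusc y hy zs hzsC x hx hweak
      exact le_trans (limsup_nonneg_aux _ hnn) hls
  rw [key]
  constructor
  · apply IsSeqClosed.isClosed
    intro xn x hxn hlim
    have hxC : x ∈ C := hCcl.isSeqClosed (fun n => (hxn n).1) hlim
    refine ⟨hxC, fun y hy => ?_⟩
    by_contra hcon
    push_neg at hcon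
    have hlsc := hflsc y hy x hxC 0 hcon
    have hlim' : Tendsto xn atTop (nhdsWithin x C) :=
      tendsto_nhdsWithin_iff.mpr ⟨hlim, Filter.Eventually.of_forall (fun n => (hxn n).1)⟩
    obtain ⟨n, hn⟩ := (hlim'.eventually hlsc).exists
    exact absurd ((hxn n).2 y hy) (not_le.mpr hn)
  · intro a ha b hb s t hs ht hst
    refine ⟨hCcv ha.1 hb.1 hs ht hst, fun y hy => ?_⟩
    exact (((hfcv y hy).convex_le 0) ⟨ha.1, ha.2 y hy⟩ ⟨hb.1, hb.2 y hy⟩ hs ht hst).2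
end

section
/- Let H₁, H₂ be real Hilbert spaces, C ⊆ H₁ and Q ⊆ H₂ nonempty closed convex subsets, A : H₁ → H₂ a bounded linear operator, and f : H₁×H₁ → ℝ, F : H₂×H₂ → ℝ bifunctions with f(x,x) = 0 for x ∈ C and F(u,u) = 0 for u ∈ Q. Assume f is pseudomonotone on C, f(x,·) is convex and lower semicontinuous on C, f(·,y) is sequentially weakly upper semicontinuous on C, and F satisfies the same conditions over Q. Then the solution set Ω = {x* ∈ C : f(x*,y) ≥ 0 for all y ∈ C, Ax* ∈ Q, and F(Ax*,v) ≥ 0 for all v ∈ Q} is closed and convex. -/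
open RealInnerProductSpace Filter

/-- Sublevel sets of a function lsc on a closed set are closed. -/
lemma sublevel_closed {H : Type*} [TopologicalSpace H] {C : Set H} (hCcl : IsClosed C)
    {g : H → ℝ} (hg : LowerSemicontinuousOn g C) : IsClosed {x ∈ C | g x ≤ 0} := by
  rw [← isOpen_compl_iff, isOpen_iff_mem_nhds]
  intro x hx
  by_cases hxC : x ∈ C
  · have hgx : 0 < g x := by
      by_contra h
      exact hx ⟨hxC, not_lt.mp h⟩
    have hev : ∀ᶠ z in nhds x, z ∈ C → 0 < g z :=
      eventually_nhdsWithin_iff.mp (hg x hxC 0 hgx)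
    filter_upwards [hev] with z hz hmem
    exact absurd (hz hmem.1) (not_lt.mpr hmem.2)
  · have : Cᶜ ∈ nhds x := hCcl.isOpen_compl.mem_nhds hxC
    filter_upwards [this] with z hz hmem
    exact hz hmem.1

/-- Minty-type lemma: for a pseudomonotone-style bifunction with convex second
argument and weakly upper semicontinuous first argument, the "dual" solutions
are solutions. -/
lemma minty_back {H : Type*} [NormedAddCommGroup H] [InnerProductSpace ℝ H]
    {C : Set H} (hCcv : Convex ℝ C) {f : H → H → ℝ} (hf0 : ∀ x ∈ C, f x x = 0)
    (hfcv : ∀ x ∈ C, ConvexOn ℝ C (f x))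
    (hfwusc : ∀ y ∈ C, ∀ (zs : ℕ → H), (∀ m, zs m ∈ C) → ∀ xl ∈ C,
      (∀ h : H, Tendsto (fun m => (⟪zs m, h⟫)) atTop (nhds (⟪xl, h⟫))) →
      Filter.limsup (fun m => f (zs m) y) atTop ≤ f xl y)
    {x : H} (hx : x ∈ C) (h : ∀ y ∈ C, f y x ≤ 0) :
    ∀ y ∈ C, 0 ≤ f x y := by
  intro y hy
  set t : ℕ → ℝ := fun m => ((m : ℝ) + 2)⁻¹ with ht
  have ht0 : ∀ m, 0 < t m := fun m => by positivity
  have ht1 : ∀ m, t m ≤ 1 := by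
    intro m
    rw [ht]
    simp only
    rw [inv_le_one_iff₀]
    right; nlinarith [Nat.cast_nonneg (α := ℝ) m]
  set zs : ℕ → H := fun m => (1 - t m) • x + t m • y with hzs
  have hzsC : ∀ m, zs m ∈ C := fun m =>
    hCcv hx hy (by linarith [ht1 m]) (ht0 m).le (by ring)
  -- each zs m satisfies 0 ≤ f (zs m) y
  have hpos : ∀ m, 0 ≤ f (zs m) y := by
    intro m
    have ha : (0:ℝ) ≤ 1 - t m := by linarith [ht1 m]
    have hb : (0:ℝ) ≤ t m := (ht0 m).le
    have hab : (1 - t m) + t m = 1 := by ring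
    have hcv := (hfcv (zs m) (hzsC m)).2 hx hy ha hb hab
    rw [show (1 - t m) • x + t m • y = zs m from rfl, hf0 (zs m) (hzsC m)] at hcv
    simp only [smul_eq_mul] at hcv
    have h1 : f (zs m) x ≤ 0 := h (zs m) (hzsC m)
    have h2 : 0 ≤ t m * f (zs m) y := by nlinarith [mul_nonpos_of_nonneg_of_nonpos ha h1]
    nlinarith [ht0 m]
  -- zs → x strongly, hence the inner products converge
  have htend : Tendsto zs atTop (nhds x) := by
    have htt : Tendsto t atTop (nhds 0) := by
      apply tendsto_inv_atTop_zero.comp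
      exact tendsto_atTop_add_const_right _ 2 tendsto_natCast_atTop_atTop
    have : Tendsto (fun m => (1 - t m) • x + t m • y) atTop
        (nhds ((1 - (0:ℝ)) • x + (0:ℝ) • y)) := by
      exact (((tendsto_const_nhds.sub htt).smul_const x).add (htt.smul_const y))
    simpa using this
  have hinner : ∀ h : H, Tendsto (fun m => (⟪zs m, h⟫)) atTop (nhds (⟪x, h⟫)) := by
    intro h
    exact (htend.inner (tendsto_const_nhds (x := h)))
  have hls := hfwusc y hy zs hzsC x hx hinner
  -- conclude 0 ≤ f x y using 0 ≤ limsup ≤ f x y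
  by_cases hb : IsBoundedUnder (· ≤ ·) atTop (fun m => f (zs m) y)
  · have h0 : (0:ℝ) ≤ Filter.limsup (fun m => f (zs m) y) atTop :=
      le_limsup_of_frequently_le (Frequently.of_forall hpos) hb
    linarith
  · have hempty : {a : ℝ | ∀ᶠ m in atTop, f (zs m) y ≤ a} = ∅ := by
      rw [Set.eq_empty_iff_forall_notMem]
      intro a ha
      exact hb ⟨a, ha⟩
    rw [Filter.limsup_eq, hempty, Real.sInf_empty] at hls
    linarith

/-- the solution set `Ω` of the split equilibrium problem is
closed and convex. -/
theorem stmt11 {H₁ H₂ : Type*}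
    [NormedAddCommGroup H₁] [InnerProductSpace ℝ H₁] [CompleteSpace H₁]
    [NormedAddCommGroup H₂] [InnerProductSpace ℝ H₂] [CompleteSpace H₂]
    (C : Set H₁) (hCne : C.Nonempty) (hCcl : IsClosed C) (hCcv : Convex ℝ C)
    (Q : Set H₂) (hQne : Q.Nonempty) (hQcl : IsClosed Q) (hQcv : Convex ℝ Q)
    (A : H₁ →L[ℝ] H₂)
    (f : H₁ → H₁ → ℝ) (hf0 : ∀ x ∈ C, f x x = 0)
    (F : H₂ → H₂ → ℝ) (hF0 : ∀ u ∈ Q, F u u = 0)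
    (hfpm : ∀ x ∈ C, ∀ y ∈ C, 0 ≤ f x y → f y x ≤ 0)
    (hFpm : ∀ u ∈ Q, ∀ v ∈ Q, 0 ≤ F u v → F v u ≤ 0)
    (hfcv : ∀ x ∈ C, ConvexOn ℝ C (f x))
    (hflsc : ∀ x ∈ C, LowerSemicontinuousOn (f x) C)
    (hfwusc : ∀ y ∈ C, ∀ (zs : ℕ → H₁), (∀ m, zs m ∈ C) → ∀ xl ∈ C,
      (∀ h : H₁, Tendsto (fun m => (⟪zs m, h⟫)) atTop (nhds (⟪xl, h⟫))) →
      Filter.limsup (fun m => f (zs m) y) atTop ≤ f xl y)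
    (hFcv : ∀ u ∈ Q, ConvexOn ℝ Q (F u))
    (hFlsc : ∀ u ∈ Q, LowerSemicontinuousOn (F u) Q)
    (hFwusc : ∀ v ∈ Q, ∀ (us : ℕ → H₂), (∀ m, us m ∈ Q) → ∀ ul ∈ Q,
      (∀ h : H₂, Tendsto (fun m => (⟪us m, h⟫)) atTop (nhds (⟪ul, h⟫))) →
      Filter.limsup (fun m => F (us m) v) atTop ≤ F ul v) :
    IsClosed {xs | xs ∈ C ∧ (∀ y ∈ C, 0 ≤ f xs y) ∧ A xs ∈ Q ∧ ∀ v ∈ Q, 0 ≤ F (A xs) v} ∧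
    Convex ℝ {xs | xs ∈ C ∧ (∀ y ∈ C, 0 ≤ f xs y) ∧ A xs ∈ Q ∧ ∀ v ∈ Q, 0 ≤ F (A xs) v} := by
  -- Minty reformulation of the solution set
  have hkey : {xs | xs ∈ C ∧ (∀ y ∈ C, 0 ≤ f xs y) ∧ A xs ∈ Q ∧ ∀ v ∈ Q, 0 ≤ F (A xs) v}
      = (⋂ y ∈ C, {x ∈ C | f y x ≤ 0}) ∩ A ⁻¹' (⋂ v ∈ Q, {u ∈ Q | F v u ≤ 0}) := by
    ext x
    simp only [Set.mem_setOf_eq, Set.mem_inter_iff, Set.mem_preimage, Set.mem_iInter]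
    constructor
    · rintro ⟨hxC, hsol, hAxQ, hFsol⟩
      exact ⟨fun y hy => ⟨hxC, hfpm x hxC y hy (hsol y hy)⟩,
             fun v hv => ⟨hAxQ, hFpm (A x) hAxQ v hv (hFsol v hv)⟩⟩
    · rintro ⟨h1, h2⟩
      obtain ⟨y₀, hy₀⟩ := hCne
      obtain ⟨v₀, hv₀⟩ := hQne
      have hxC : x ∈ C := (h1 y₀ hy₀).1
      have hAxQ : A x ∈ Q := (h2 v₀ hv₀).1
      refine ⟨hxC, ?_, hAxQ, ?_⟩
      · exact minty_back hCcv hf0 hfcv hfwusc hxC (fun y hy => (h1 y hy).2)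
      · exact minty_back hQcv hF0 hFcv hFwusc hAxQ (fun v hv => (h2 v hv).2)
  rw [hkey]
  constructor
  · apply IsClosed.inter
    · exact isClosed_biInter fun y hy => sublevel_closed hCcl (hflsc y hy)
    · exact (isClosed_biInter fun v hv => sublevel_closed hQcl (hFlsc v hv)).preimage
        A.continuous
  · apply Convex.inter
    · exact convex_iInter₂ fun y hy => (hfcv y hy).convex_le 0
    · exact (convex_iInter₂ fun v hv => (hFcv v hv).convex_le 0).linear_preimage
        (A : H₁ →ₗ[ℝ] H₂)
end

section
/- Let x ≥ 1 be a real number and define h : [1,∞) → ℝ by h(t) = (t − x)² + 1/t. Then h′(x + 1/(4x²)) < 0, and consequently any minimizer u of h over [1,∞) satisfies u > x + 1/(4x²). -/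
/-! Since `h′(t) = 2(t − x) − 1/t²` is strictly increasing on `(0, ∞)`, it suffices to compare
`h′` at the two points. At `t₀ = x + 1/(4x²)` we have `2(t₀ − x) = 1/(2x²) < 1/t₀²` because
`t₀ ≤ x + 1/4 < √2 x`, so `h′(t₀) < 0`; while a minimizer `u` of `h` over `[1, ∞)` has
`h′(u) ≥ 0`, the direction `+1` being admissible at every point of `[1, ∞)`. -/

open Set

theorem IsMinOn.hasDerivAt_nonneg_of_mem_Ici {f : ℝ → ℝ} {a u f' : ℝ}
    (hmin : IsMinOn f (Ici a) u) (hu : u ∈ Ici a) (hf : HasDerivAt f f' u) : 0 ≤ f' := by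
  have hdir : (1 : ℝ) ∈ posTangentConeAt (Ici a) u := by
    refine mem_posTangentConeAt_of_segment_subset ?_
    rw [segment_eq_Icc (by linarith)]
    exact Icc_subset_Ici_iff (by linarith) |>.2 hu
  simpa using hmin.localize.hasFDerivWithinAt_nonneg hf.hasFDerivAt.hasFDerivWithinAt hdir

theorem hasDerivAt_sub_sq_add_one_div (x : ℝ) {t : ℝ} (ht : t ≠ 0) :
    HasDerivAt (fun s => (s - x) ^ 2 + 1 / s) (2 * (t - x) - 1 / t ^ 2) t := by
  have hsq : HasDerivAt (fun s => (s - x) ^ 2) (2 * (t - x)) t :=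
    ((hasDerivAt_id' t).sub_const x).fun_pow 2 |>.congr_deriv (by ring)
  have hinv : HasDerivAt (fun s => 1 / s) (-(1 / t ^ 2)) t := by
    simpa only [one_div] using hasDerivAt_inv ht
  exact (hsq.add hinv).congr_deriv (sub_eq_add_neg _ _).symm

theorem strictMonoOn_two_mul_sub_sub_one_div_sq (x : ℝ) :
    StrictMonoOn (fun t : ℝ => 2 * (t - x) - 1 / t ^ 2) (Ioi 0) := by
  intro s hs t _ hst
  have : 1 / t ^ 2 < 1 / s ^ 2 :=
    one_div_lt_one_div_of_lt (pow_pos hs 2) (pow_lt_pow_left₀ hst (le_of_lt hs) two_ne_zero)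
  show 2 * (s - x) - 1 / s ^ 2 < 2 * (t - x) - 1 / t ^ 2
  linarith

theorem two_mul_sub_sub_one_div_sq_neg {x : ℝ} (hx : 1 ≤ x) :
    2 * (x + 1 / (4 * x ^ 2) - x) - 1 / (x + 1 / (4 * x ^ 2)) ^ 2 < 0 := by
  set t₀ := x + 1 / (4 * x ^ 2)
  have hx2 : 1 ≤ x ^ 2 := one_le_pow₀ hx
  have hslope : 2 * (t₀ - x) = 1 / (2 * x ^ 2) := by
    simp only [t₀]
    ring
  have hclose : t₀ ≤ x + 1 / 4 := by
    have : 1 / (4 * x ^ 2) ≤ 1 / 4 := one_div_le_one_div_of_le (by norm_num) (by linarith)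
    simp only [t₀]
    linarith
  have ht₀ : 0 < t₀ := by positivity
  have hsq : t₀ ^ 2 < 2 * x ^ 2 := by nlinarith
  rw [hslope, sub_neg]
  exact one_div_lt_one_div_of_lt (by positivity) hsq

/-- Remark 4.3: for `x ≥ 1` and `h(t) = (t − x)² + 1/t`, one has
`h′(x + 1/(4x²)) < 0`, so every minimizer of `h` over `[1,∞)` lies strictly to
the right of `x + 1/(4x²)`. -/
theorem stmt13 (x : ℝ) (hx : 1 ≤ x) (h : ℝ → ℝ)
    (hh : ∀ t, h t = (t - x) ^ 2 + 1 / t) :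
    deriv h (x + 1 / (4 * x ^ 2)) < 0 ∧
    ∀ u : ℝ, 1 ≤ u → (∀ t, 1 ≤ t → h u ≤ h t) → x + 1 / (4 * x ^ 2) < u := by
  have hderiv {t : ℝ} (ht : t ≠ 0) : HasDerivAt h (2 * (t - x) - 1 / t ^ 2) t := by
    rw [funext hh]
    exact hasDerivAt_sub_sq_add_one_div x ht
  have ht₀ : 0 < x + 1 / (4 * x ^ 2) := by positivity
  have hneg := two_mul_sub_sub_one_div_sq_neg hx
  refine ⟨(hderiv ht₀.ne').deriv ▸ hneg, fun u hu hmin => ?_⟩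
  have hu₀ : 0 < u := by linarith
  have hderiv_u := IsMinOn.hasDerivAt_nonneg_of_mem_Ici hmin hu (hderiv hu₀.ne')
  exact (strictMonoOn_two_mul_sub_sub_one_div_sq x).lt_iff_lt ht₀ hu₀ |>.1
    (hneg.trans_le hderiv_u)
end
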